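/- arXiv:1611.08662 — 8 statements merged into one kernel-verified Lean document; each statement's English description precedes it below -/
import Mathlib

section
/- There exists a 6-dimensional solvable real Lie algebra 𝔤 that is not nilpotent, together with an invariant nondegenerate symmetric bilinear form ⟨·,·⟩ of signature (4,2), such that the Killing form of 𝔤 vanishes identically and the nilradical of 𝔤 has dimension 5. -/
/-
The algebra is the double extension of Minkowski space ℝ^{3,1} by the skew map that rotates the
spacelike plane ⟨e₁, e₂⟩ and boosts the plane ⟨e₃, e₄⟩: on the basis e₀, …, e₅,
[e₀, e₁] = e₂, [e₀, e₂] = -e₁, [e₀, e₃] = e₄, [e₀, e₄] = e₃, [e₁, e₂] = e₅, [e₃, e₄] = -e₅,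
with the invariant form extending diag(1, 1, 1, -1) on e₁, …, e₄ by the hyperbolic pairing of e₀
with e₅; the vectors e₀ ± e₅/2 complete an orthonormal basis of signature (4, 2).

The Killing form vanishes because the rotation and the boost contribute -2 and +2 to tr (ad e₀)².
In coordinates x = Σ xᵢ eᵢ, the hyperplane x₀ = 0 is two-step nilpotent and contains [𝔤, 𝔤], so 𝔤
is solvable. No nilpotent ideal leaves it: if x₀ ≠ 0, then w = [x, e₃ + e₄] lies in every ideal
containing x and is an eigenvector of ad x with the nonzero real eigenvalue x₀, which the boost
makes possible. For x = e₀ this also shows that 𝔤 is not nilpotent.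
-/

section

variable {R L : Type*} [CommRing R] [LieRing L] [LieAlgebra R L]

theorem LieModule.eq_zero_of_lie_eq_smul [IsDomain R] {M : Type*} [AddCommGroup M] [Module R M]
    [Module.IsTorsionFree R M] [LieRingModule L M] [LieModule R L M] [LieModule.IsNilpotent L M]
    {x : L} {m : M} {c : R} (h : ⁅x, m⁆ = c • m) (hm : m ≠ 0) : c = 0 := by
  have hc : (toEnd R L M x).HasEigenvalue c :=
    Module.End.hasEigenvalue_of_hasEigenvector ⟨Module.End.mem_eigenspace_iff.mpr h, hm⟩
  exact (hc.isNilpotent_of_isNilpotent (isNilpotent_toEnd_of_isNilpotent R L M x)).eq_zero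

theorem LieRing.isNilpotent_of_lie_lie_eq_zero (h : ∀ x y z : L, ⁅x, ⁅y, z⁆⁆ = 0) :
    LieRing.IsNilpotent L := by
  have hcentral : ⁅(⊤ : LieIdeal ℤ L), (⊤ : LieIdeal ℤ L)⁆ ≤ LieModule.maxTrivSubmodule ℤ L L :=
    (LieSubmodule.lie_le_iff _ _ _).mpr fun y _ z _ x => h x y z
  refine LieModule.IsNilpotent.mk (R := ℤ) (L := L) L (k := 2) ?_
  rw [LieModule.lowerCentralSeries_succ, LieModule.lowerCentralSeries_succ,
    LieModule.lowerCentralSeries_zero, LieSubmodule.lie_eq_bot_iff]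
  exact fun x _ m hm => hcentral hm x

theorem LieAlgebra.isSolvable_of_derivedSeries_one_le {I : LieIdeal R L} [IsSolvable I]
    (h : derivedSeries R L 1 ≤ I) : IsSolvable L := by
  obtain ⟨k, hk⟩ := IsSolvable.solvable (R := R) (L := I)
  rw [LieIdeal.derivedSeries_eq_bot_iff] at hk
  refine IsSolvable.mk (R := R) (k := k + 1) (eq_bot_iff.mpr ?_)
  calc derivedSeries R L (k + 1) = derivedSeriesOfIdeal R L k (derivedSeries R L 1) := by
        rw [derivedSeries_def, derivedSeriesOfIdeal_add, ← derivedSeries_def]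
    _ ≤ derivedSeriesOfIdeal R L k I := derivedSeriesOfIdeal_mono h k
    _ = ⊥ := hk

end

-- A synonym, so that the pointwise (abelian) Lie bracket of `Fin 6 → ℝ` is not picked up.
def RotBoost : Type := Fin 6 → ℝ

namespace RotBoost

instance : AddCommGroup RotBoost := inferInstanceAs (AddCommGroup (Fin 6 → ℝ))
noncomputable instance : Module ℝ RotBoost := inferInstanceAs (Module ℝ (Fin 6 → ℝ))
instance : FiniteDimensional ℝ RotBoost := inferInstanceAs (FiniteDimensional ℝ (Fin 6 → ℝ))

@[ext] lemma ext {x y : RotBoost} (h : ∀ i, x i = y i) : x = y := funext h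

@[simp] lemma add_apply (x y : RotBoost) (i : Fin 6) : (x + y) i = x i + y i := rfl
@[simp] lemma sub_apply (x y : RotBoost) (i : Fin 6) : (x - y) i = x i - y i := rfl
@[simp] lemma smul_apply (c : ℝ) (x : RotBoost) (i : Fin 6) : (c • x) i = c * x i := rfl
@[simp] lemma zero_apply (i : Fin 6) : (0 : RotBoost) i = 0 := rfl

def bracket (x y : RotBoost) : RotBoost :=
  ![0, x 2 * y 0 - x 0 * y 2, x 0 * y 1 - x 1 * y 0, x 0 * y 4 - x 4 * y 0,
    x 0 * y 3 - x 3 * y 0, x 1 * y 2 - x 2 * y 1 - x 3 * y 4 + x 4 * y 3]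

instance : LieRing RotBoost where
  bracket := bracket
  add_lie x y z := by ext i; rw [add_apply]; fin_cases i <;> simp [bracket] <;> ring
  lie_add x y z := by ext i; rw [add_apply]; fin_cases i <;> simp [bracket] <;> ring
  lie_self x := by ext i; fin_cases i <;> simp [bracket] <;> ring
  leibniz_lie x y z := by ext i; rw [add_apply]; fin_cases i <;> simp [bracket] <;> ring

@[simp] lemma lie_apply (x y : RotBoost) (i : Fin 6) : ⁅x, y⁆ i = bracket x y i := rfl

noncomputable instance : LieAlgebra ℝ RotBoost where
  lie_smul c x y := by ext i; rw [smul_apply]; fin_cases i <;> simp [bracket] <;> ring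

noncomputable def form : LinearMap.BilinForm ℝ RotBoost :=
  LinearMap.mk₂ ℝ (fun x y => x 1 * y 1 + x 2 * y 2 + x 3 * y 3 - x 4 * y 4 + x 0 * y 5 + x 5 * y 0)
    (fun _ _ _ => by simp only [add_apply]; ring) (fun _ _ _ => by simp only [smul_apply]; ring)
    (fun _ _ _ => by simp only [add_apply]; ring) (fun _ _ _ => by simp only [smul_apply]; ring)

lemma form_apply (x y : RotBoost) :
    form x y = x 1 * y 1 + x 2 * y 2 + x 3 * y 3 - x 4 * y 4 + x 0 * y 5 + x 5 * y 0 := rfl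

lemma form_comm (x y : RotBoost) : form x y = form y x := by
  simp only [form_apply]; ring

lemma form_lie (x y z : RotBoost) : form ⁅x, y⁆ z = - form y ⁅x, z⁆ := by
  simp only [form_apply, lie_apply]; simp [bracket]; ring

def e (i : Fin 6) : RotBoost := fun j => if i = j then 1 else 0

@[simp] lemma e_apply (i j : Fin 6) : e i j = if i = j then 1 else 0 := rfl

noncomputable def orthoFamily : Fin 6 → RotBoost :=
  ![e 1, e 2, e 3, e 0 + (1 / 2 : ℝ) • e 5, e 4, e 0 - (1 / 2 : ℝ) • e 5]

lemma form_orthoFamily (i j : Fin 6) : form (orthoFamily i) (orthoFamily j) =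
    if i = j then (if (i : ℕ) < 4 then 1 else -1) else 0 := by
  fin_cases i <;> fin_cases j <;> simp [orthoFamily, form_apply] <;> norm_num

lemma iIsOrtho_orthoFamily : form.iIsOrtho orthoFamily :=
  LinearMap.BilinForm.iIsOrtho_def.mpr fun i j hij => by simp [form_orthoFamily, hij]

lemma form_orthoFamily_self_ne_zero (i : Fin 6) : form (orthoFamily i) (orthoFamily i) ≠ 0 := by
  rw [form_orthoFamily, if_pos rfl]; split_ifs <;> norm_num

lemma finrank_eq_six : Module.finrank ℝ RotBoost = 6 := Module.finrank_fin_fun ℝ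

noncomputable def orthoBasis : Module.Basis (Fin 6) ℝ RotBoost :=
  basisOfLinearIndependentOfCardEqFinrank
    (LinearMap.BilinForm.linearIndependent_of_iIsOrtho iIsOrtho_orthoFamily
      form_orthoFamily_self_ne_zero)
    (by rw [finrank_eq_six, Fintype.card_fin])

lemma coe_orthoBasis : ⇑orthoBasis = orthoFamily := coe_basisOfLinearIndependentOfCardEqFinrank _ _

lemma form_nondegenerate : form.Nondegenerate :=
  (LinearMap.BilinForm.iIsOrtho.nondegenerate_iff_not_isOrtho_basis_self form orthoBasis
    (coe_orthoBasis ▸ iIsOrtho_orthoFamily)).mpr (coe_orthoBasis ▸ form_orthoFamily_self_ne_zero)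

noncomputable def coordZero : Module.Dual ℝ RotBoost where
  toFun x := x 0
  map_add' _ _ := rfl
  map_smul' _ _ := rfl

lemma coordZero_apply (x : RotBoost) : coordZero x = x 0 := rfl

noncomputable def nilradical : LieIdeal ℝ RotBoost where
  toSubmodule := LinearMap.ker coordZero
  lie_mem {x y} _ := show ⁅x, y⁆ 0 = 0 by simp [bracket]

lemma mem_nilradical {x : RotBoost} : x ∈ nilradical ↔ x 0 = 0 := Iff.rfl

lemma finrank_nilradical : Module.finrank ℝ nilradical = 5 := by
  have hcoordZero : coordZero ≠ 0 := fun h => by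
    have : coordZero (e 0) = 0 := LinearMap.congr_fun h (e 0)
    simp [coordZero_apply] at this
  have := Module.Dual.finrank_ker_add_one_of_ne_zero hcoordZero
  rw [finrank_eq_six] at this
  exact Nat.add_right_cancel this

noncomputable def stdBasis : Module.Basis (Fin 6) ℝ RotBoost := Pi.basisFun ℝ (Fin 6)

lemma stdBasis_apply (i : Fin 6) : stdBasis i = e i :=
  (Pi.basisFun_apply ℝ (Fin 6) i).trans (funext fun j => by simp [Pi.single_apply, eq_comm])

lemma stdBasis_repr_apply (x : RotBoost) (i : Fin 6) : stdBasis.repr x i = x i := rfl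

lemma killingForm_eq_zero : killingForm ℝ RotBoost = 0 := by
  ext x y
  rw [killingForm_apply_apply, LinearMap.zero_apply, LinearMap.zero_apply,
    LinearMap.trace_eq_matrix_trace ℝ stdBasis, Matrix.trace, Fin.sum_univ_six]
  simp only [Matrix.diag_apply, LinearMap.toMatrix_apply, stdBasis_repr_apply, stdBasis_apply,
    LinearMap.comp_apply, LieAlgebra.ad_apply, lie_apply]
  simp [bracket]


lemma lie_lie_eq_zero_of_mem_nilradical (x : RotBoost) {y z : RotBoost} (hy : y ∈ nilradical)
    (hz : z ∈ nilradical) : ⁅x, ⁅y, z⁆⁆ = 0 := by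
  rw [mem_nilradical] at hy hz
  ext i; fin_cases i <;> simp [bracket, hy, hz]

instance isNilpotent_nilradical : LieRing.IsNilpotent nilradical :=
  LieRing.isNilpotent_of_lie_lie_eq_zero fun x y z =>
    Subtype.ext (lie_lie_eq_zero_of_mem_nilradical x y.2 z.2)

lemma isSolvable : LieAlgebra.IsSolvable RotBoost := by
  refine LieAlgebra.isSolvable_of_derivedSeries_one_le (R := ℝ) (I := nilradical) ?_
  rw [LieAlgebra.derivedSeries_def, LieAlgebra.derivedSeriesOfIdeal_succ,
    LieAlgebra.derivedSeriesOfIdeal_zero, LieSubmodule.lie_le_iff]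
  exact fun x _ y _ => show ⁅x, y⁆ 0 = 0 by simp [bracket]

def boostVector : RotBoost := e 3 + e 4

lemma lie_boostVector_apply_three (x : RotBoost) : ⁅x, boostVector⁆ 3 = x 0 := by
  simp [boostVector, bracket]

lemma lie_lie_boostVector (x : RotBoost) : ⁅x, ⁅x, boostVector⁆⁆ = x 0 • ⁅x, boostVector⁆ := by
  ext i; fin_cases i <;> simp [boostVector, bracket]; ring

lemma lie_boostVector_ne_zero {x : RotBoost} (hx : x 0 ≠ 0) : ⁅x, boostVector⁆ ≠ 0 :=
  fun h => hx (by rw [← lie_boostVector_apply_three x, h, zero_apply])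

lemma not_isNilpotent : ¬ LieRing.IsNilpotent RotBoost := fun _ => by
  have h := lie_lie_boostVector (e 0)
  rw [e_apply, if_pos rfl] at h
  exact one_ne_zero (LieModule.eq_zero_of_lie_eq_smul h
    (lie_boostVector_ne_zero (by simp)))

lemma le_nilradical (m : LieIdeal ℝ RotBoost) [LieRing.IsNilpotent m] : m ≤ nilradical := by
  intro x hx
  by_contra hx0
  rw [mem_nilradical] at hx0
  have hw : ⁅x, boostVector⁆ ∈ m := lie_mem_left ℝ RotBoost m x boostVector hx
  have h : ⁅(⟨x, hx⟩ : m), (⟨⁅x, boostVector⁆, hw⟩ : m)⁆ = x 0 • (⟨⁅x, boostVector⁆, hw⟩ : m) :=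
    Subtype.ext (lie_lie_boostVector x)
  exact hx0 (LieModule.eq_zero_of_lie_eq_smul h
    (fun h0 => lie_boostVector_ne_zero hx0 (congrArg Subtype.val h0)))

end RotBoost

/-- There is a 6-dimensional solvable, non-nilpotent real Lie algebra with an
invariant nondegenerate symmetric bilinear form of signature (4,2), vanishing Killing form, and
5-dimensional nilradical. -/
theorem stmt_2 :
    ∃ (L : Type) (_ : LieRing L) (_ : LieAlgebra ℝ L),
      LieAlgebra.IsSolvable L ∧ ¬ LieRing.IsNilpotent L ∧
      ∃ B : LinearMap.BilinForm ℝ L,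
        (∀ x y : L, B x y = B y x) ∧
        B.Nondegenerate ∧
        (∀ x y z : L, B ⁅x, y⁆ z = - B y ⁅x, z⁆) ∧
        (∃ b : Module.Basis (Fin 6) ℝ L,
          ∀ i j, B (b i) (b j) =
            if i = j then (if (i : ℕ) < 4 then 1 else -1) else 0) ∧
        killingForm ℝ L = 0 ∧
        ∃ n : LieIdeal ℝ L,
          LieRing.IsNilpotent n ∧
          (∀ m : LieIdeal ℝ L, LieRing.IsNilpotent m → m ≤ n) ∧
          Module.finrank ℝ n = 5 :=
  ⟨RotBoost, inferInstance, inferInstance, RotBoost.isSolvable, RotBoost.not_isNilpotent,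
    RotBoost.form, RotBoost.form_comm, RotBoost.form_nondegenerate, RotBoost.form_lie,
    ⟨RotBoost.orthoBasis, RotBoost.coe_orthoBasis ▸ RotBoost.form_orthoFamily⟩,
    RotBoost.killingForm_eq_zero, RotBoost.nilradical, RotBoost.isNilpotent_nilradical,
    fun m _ => RotBoost.le_nilradical m, RotBoost.finrank_nilradical⟩
end

section
/- For every integer n ≥ 6 there exists an n-dimensional solvable real Lie algebra that is not nilpotent and carries an invariant nondegenerate symmetric bilinear form whose Killing form vanishes identically. -/
/-!
Let `𝔪 = ℝ d ⋉ 𝔥₅`, where `𝔥₅ = span {p₁, q₁, p₂, q₂, z}` is the Heisenberg algebra with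
`[p₁, q₁] = z = -[p₂, q₂]`, and `d` acts by `diag (1, -1)` on `span {p₁, q₁}` and as an
infinitesimal rotation on `span {p₂, q₂}`. Only `ad d` contributes to the Killing form, and
`tr (ad d)² = 1 + 1 - 1 - 1 = 0`, so the Killing form vanishes. The form pairing `d` with `z` and `p₁` with `q₁`, and negative definite on
`span {p₂, q₂}`, is invariant and nondegenerate. Adding an abelian factor `ℝᵏ` orthogonally keeps
all of this and reaches every dimension `6 + k`. Solvability is Cartan's criterion, and the algebra
is not nilpotent because `[d, p₁] = p₁`.
-/

open LinearMap (BilinForm)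

section Prod

variable {R P Q : Type*} [CommRing R]

namespace LinearMap.BilinForm

variable [AddCommGroup P] [Module R P] [AddCommGroup Q] [Module R Q]

def prod (B₁ : BilinForm R P) (B₂ : BilinForm R Q) : BilinForm R (P × Q) :=
  B₁.compl₁₂ (fst R P Q) (fst R P Q) + B₂.compl₁₂ (snd R P Q) (snd R P Q)

variable {B₁ : BilinForm R P} {B₂ : BilinForm R Q}

@[simp]
theorem prod_apply (x y : P × Q) : B₁.prod B₂ x y = B₁ x.1 y.1 + B₂ x.2 y.2 := rfl

theorem IsSymm.prod (h₁ : B₁.IsSymm) (h₂ : B₂.IsSymm) : (B₁.prod B₂).IsSymm :=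
  ⟨fun x y => by simp [h₁.eq x.1, h₂.eq x.2]⟩

theorem Nondegenerate.prod (h₁ : B₁.Nondegenerate) (h₂ : B₂.Nondegenerate) :
    (B₁.prod B₂).Nondegenerate := by
  refine ⟨fun x hx => Prod.ext ?_ ?_, fun y hy => Prod.ext ?_ ?_⟩
  · exact h₁.1 x.1 fun y => by simpa using hx (y, 0)
  · exact h₂.1 x.2 fun y => by simpa using hx (0, y)
  · exact h₁.2 y.1 fun x => by simpa using hy (x, 0)
  · exact h₂.2 y.2 fun x => by simpa using hy (0, x)

end LinearMap.BilinForm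

variable [LieRing P] [LieAlgebra R P] [LieRing Q] [LieAlgebra R Q]

theorem LinearMap.BilinForm.lieInvariant.prod {B₁ : BilinForm R P} {B₂ : BilinForm R Q}
    (h₁ : B₁.lieInvariant P) (h₂ : B₂.lieInvariant Q) : (B₁.prod B₂).lieInvariant (P × Q) :=
  fun x y z => by
    simp only [prod_apply, LieAlgebra.Prod.bracket_apply, h₁ x.1, h₂ x.2, neg_add]

theorem LinearMap.BilinForm.lieInvariant_of_isLieAbelian [IsLieAbelian P] (B : BilinForm R P) :
    B.lieInvariant P :=
  fun x y z => by simp only [trivial_lie_zero, map_zero, LinearMap.zero_apply, neg_zero]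

theorem killingForm_eq_zero_of_isLieAbelian [IsLieAbelian P] : killingForm R P = 0 := by
  ext x y
  have : LieAlgebra.ad R P y = 0 := LinearMap.ext fun z => trivial_lie_zero P P y z
  simp [killingForm_apply_apply, this]

theorem killingForm_prod_apply [Module.Free R P] [Module.Finite R P] [Module.Free R Q]
    [Module.Finite R Q] (x y : P × Q) :
    killingForm R (P × Q) x y = killingForm R P x.1 y.1 + killingForm R Q x.2 y.2 := by
  have : LieAlgebra.ad R (P × Q) x ∘ₗ LieAlgebra.ad R (P × Q) y =
      (LieAlgebra.ad R P x.1 ∘ₗ LieAlgebra.ad R P y.1).prodMap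
        (LieAlgebra.ad R Q x.2 ∘ₗ LieAlgebra.ad R Q y.2) := rfl
  simp only [killingForm_apply_apply, this, LinearMap.trace_prodMap']

theorem killingForm_prod_eq_zero [Module.Free R P] [Module.Finite R P] [Module.Free R Q]
    [Module.Finite R Q] (hP : killingForm R P = 0) (hQ : killingForm R Q = 0) :
    killingForm R (P × Q) = 0 :=
  LinearMap.ext₂ fun x y => by simp [killingForm_prod_apply, hP, hQ]

end Prod

theorem LieRing.not_isNilpotent_of_lie_eq_self {L : Type*} [LieRing L] {x y : L} (hy : y ≠ 0)
    (h : ⁅x, y⁆ = y) : ¬ LieRing.IsNilpotent L := by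
  intro _
  obtain ⟨k, hk⟩ := LieModule.exists_forall_pow_toEnd_eq_zero ℤ L L
  have : (LieModule.toEnd ℤ L L x ^ k) y = y := by
    rw [Module.End.pow_apply]
    exact Function.iterate_fixed h k
  exact hy (by rw [← this, hk]; rfl)

def AbelianLieAlgebra (V : Type*) : Type _ := V

namespace AbelianLieAlgebra

variable {R V : Type*} [CommRing R] [AddCommGroup V] [Module R V]

instance : AddCommGroup (AbelianLieAlgebra V) := inferInstanceAs (AddCommGroup V)
instance : Module R (AbelianLieAlgebra V) := inferInstanceAs (Module R V)
instance [Module.Finite R V] : Module.Finite R (AbelianLieAlgebra V) :=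
  inferInstanceAs (Module.Finite R V)
instance [Module.Free R V] : Module.Free R (AbelianLieAlgebra V) :=
  inferInstanceAs (Module.Free R V)

instance : LieRing (AbelianLieAlgebra V) where
  bracket _ _ := 0
  add_lie _ _ _ := (add_zero 0).symm
  lie_add _ _ _ := (add_zero 0).symm
  lie_self _ := rfl
  leibniz_lie _ _ _ := (add_zero 0).symm

instance : LieAlgebra R (AbelianLieAlgebra V) where
  lie_smul _ _ _ := (smul_zero _).symm

instance : IsLieAbelian (AbelianLieAlgebra V) := ⟨fun _ _ => rfl⟩

end AbelianLieAlgebra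

def MixedOscillator : Type := Fin 6 → ℝ

namespace MixedOscillator

instance : AddCommGroup MixedOscillator := inferInstanceAs (AddCommGroup (Fin 6 → ℝ))
noncomputable instance : Module ℝ MixedOscillator := inferInstanceAs (Module ℝ (Fin 6 → ℝ))
instance : Module.Finite ℝ MixedOscillator := inferInstanceAs (Module.Finite ℝ (Fin 6 → ℝ))
instance : Module.Free ℝ MixedOscillator := inferInstanceAs (Module.Free ℝ (Fin 6 → ℝ))

theorem finrank_eq : Module.finrank ℝ MixedOscillator = 6 := Module.finrank_fin_fun ℝ

-- coordinates `0, …, 5` are `d, p₁, q₁, p₂, q₂, z`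
def bracket (x y : Fin 6 → ℝ) : Fin 6 → ℝ :=
  ![0,
    x 0 * y 1 - y 0 * x 1,
    y 0 * x 2 - x 0 * y 2,
    y 0 * x 4 - x 0 * y 4,
    x 0 * y 3 - y 0 * x 3,
    x 1 * y 2 - x 2 * y 1 - (x 3 * y 4 - x 4 * y 3)]

theorem bracket_add_left (x y z : Fin 6 → ℝ) : bracket (x + y) z = bracket x z + bracket y z := by
  funext i; fin_cases i <;> simp [bracket] <;> ring

theorem bracket_add_right (x y z : Fin 6 → ℝ) :
    bracket x (y + z) = bracket x y + bracket x z := by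
  funext i; fin_cases i <;> simp [bracket] <;> ring

theorem bracket_self (x : Fin 6 → ℝ) : bracket x x = 0 := by
  funext i; fin_cases i <;> simp [bracket, mul_comm]

theorem bracket_leibniz (x y z : Fin 6 → ℝ) :
    bracket x (bracket y z) = bracket (bracket x y) z + bracket y (bracket x z) := by
  funext i; fin_cases i <;> simp [bracket] <;> ring

theorem bracket_smul_right (t : ℝ) (x y : Fin 6 → ℝ) : bracket x (t • y) = t • bracket x y := by
  funext i; fin_cases i <;> simp [bracket] <;> ring

instance : LieRing MixedOscillator where
  bracket := bracket
  add_lie := bracket_add_left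
  lie_add := bracket_add_right
  lie_self := bracket_self
  leibniz_lie := bracket_leibniz

noncomputable instance : LieAlgebra ℝ MixedOscillator where
  lie_smul := bracket_smul_right

noncomputable def basis : Module.Basis (Fin 6) ℝ MixedOscillator := Pi.basisFun ℝ (Fin 6)

theorem killingForm_eq_zero : killingForm ℝ MixedOscillator = 0 := by
  ext x y
  rw [killingForm_apply_apply, LinearMap.trace_eq_matrix_trace ℝ basis, Matrix.trace]
  change ∑ i, bracket x (bracket y (Pi.single i 1)) i = 0
  simp [Fin.sum_univ_six, bracket]

def d : MixedOscillator := Pi.single 0 1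

def p₁ : MixedOscillator := Pi.single 1 1

theorem p₁_ne_zero : p₁ ≠ 0 := Pi.single_ne_zero_iff.mpr one_ne_zero

theorem lie_d_p₁ : ⁅d, p₁⁆ = p₁ := by
  change bracket (Pi.single 0 1) (Pi.single 1 1) = Pi.single 1 1
  funext i; fin_cases i <;> simp [bracket]

def formFun (x y : Fin 6 → ℝ) : ℝ :=
  x 0 * y 5 + x 5 * y 0 + x 1 * y 2 + x 2 * y 1 - x 3 * y 3 - x 4 * y 4

noncomputable def form : BilinForm ℝ MixedOscillator :=
  LinearMap.mk₂ ℝ (M := Fin 6 → ℝ) (Nₗ := Fin 6 → ℝ) formFun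
    (fun x y z => by simp only [formFun, Pi.add_apply]; ring)
    (fun t x y => by simp only [formFun, Pi.smul_apply, smul_eq_mul]; ring)
    (fun x y z => by simp only [formFun, Pi.add_apply]; ring)
    (fun t x y => by simp only [formFun, Pi.smul_apply, smul_eq_mul]; ring)

theorem form_apply (x y : MixedOscillator) : form x y = formFun x y := rfl

theorem form_isSymm : form.IsSymm :=
  ⟨fun x y => by simp only [form_apply, formFun]; ring⟩

theorem form_lieInvariant : form.lieInvariant MixedOscillator := fun x y z => by
  change formFun (bracket x y) z = -formFun y (bracket x z)
  simp [formFun, bracket]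
  ring

theorem form_nondegenerate : form.Nondegenerate := by
  refine form_isSymm.isRefl.nondegenerate_iff_separatingLeft.mpr fun x hx => ?_
  have h (j : Fin 6) : formFun x (Pi.single j 1) = 0 := hx (Pi.single j 1)
  simp only [formFun, Pi.single_apply] at h
  suffices ∀ i, x i = 0 from funext this
  intro i
  fin_cases i
  exacts [by simpa using h 5, by simpa using h 2, by simpa using h 1, by simpa using h 3,
    by simpa using h 4, by simpa using h 0]

end MixedOscillator

/-- For every `n ≥ 6` there is an `n`-dimensional solvable, non-nilpotent real
Lie algebra with an invariant nondegenerate symmetric bilinear form and identically vanishing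
Killing form. -/
theorem stmt_3 (n : ℕ) (hn : 6 ≤ n) :
    ∃ (L : Type) (_ : LieRing L) (_ : LieAlgebra ℝ L),
      Module.finrank ℝ L = n ∧
      LieAlgebra.IsSolvable L ∧ ¬ LieRing.IsNilpotent L ∧
      ∃ B : LinearMap.BilinForm ℝ L,
        (∀ x y : L, B x y = B y x) ∧
        B.Nondegenerate ∧
        (∀ x y z : L, B ⁅x, y⁆ z = - B y ⁅x, z⁆) ∧
        killingForm ℝ L = 0 := by
  obtain ⟨k, rfl⟩ := Nat.exists_eq_add_of_le hn
  let A := AbelianLieAlgebra (Fin k → ℝ)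
  let dot : BilinForm ℝ A := Matrix.toBilin' 1
  have hκ : killingForm ℝ (MixedOscillator × A) = 0 :=
    killingForm_prod_eq_zero MixedOscillator.killingForm_eq_zero
      killingForm_eq_zero_of_isLieAbelian
  refine ⟨MixedOscillator × A, inferInstance, inferInstance, ?_,
    LieAlgebra.isSolvable_of_killingForm_apply_lie_eq_zero fun x y _ => by rw [hκ]; rfl,
    LieRing.not_isNilpotent_of_lie_eq_self (x := (MixedOscillator.d, 0))
      (y := (MixedOscillator.p₁, 0))
      (by simp [MixedOscillator.p₁_ne_zero]) (by simp [MixedOscillator.lie_d_p₁]),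
    MixedOscillator.form.prod dot, (MixedOscillator.form_isSymm.prod ?_).eq,
    MixedOscillator.form_nondegenerate.prod ?_,
    MixedOscillator.form_lieInvariant.prod dot.lieInvariant_of_isLieAbelian, hκ⟩
  · rw [Module.finrank_prod, MixedOscillator.finrank_eq]
    exact congrArg _ (Module.finrank_fin_fun ℝ)
  · exact Matrix.isSymm_toBilin'_iff_isSymm.mpr Matrix.isSymm_one
  · exact LinearMap.BilinForm.nondegenerate_toBilin'_of_det_ne_zero' 1 (by simp)
end

section
/- Let (𝔤, ⟨·,·⟩) be a solvable metric Lie algebra whose Killing form vanishes identically, and suppose ⟨·,·⟩ is Lorentzian, i.e. has signature (dim 𝔤 − 1, 1). Then 𝔤 is abelian. -/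
/-!
Let `𝔡 = [𝔤, 𝔤]`. By invariance and nondegeneracy `𝔡^⊥` is central. If `𝔡 ∩ 𝔡^⊥ = 0`, then
`𝔤 = 𝔡 + 𝔷(𝔤)`, so `𝔡 = [𝔡, 𝔡]`, and solvability forces `𝔡 = 0`.

Otherwise there is a nonzero central null vector `e`. A Lorentzian form is positive definite on a
hyperplane, hence positive semidefinite on `e^⊥` with null vectors `ℝ e`, and positive definite on
`E = {e, d}^⊥` for a null partner `d` with `⟨e, d⟩ = 1`. As `e` is central, `ad x` maps `𝔤` into `e^⊥`, and computing the trace in the dual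
bases `(e, d, u_k)`, `(d, e, u_k / ⟨u_k, u_k⟩)` (with `u` an orthogonal basis of `E`) gives
`κ(x, x) = -∑ ⟨[x, u_k], [x, u_k]⟩ / ⟨u_k, u_k⟩`. So `κ = 0` forces `[x, E] ⊆ ℝ e`, and
invariance then kills `[x, d]` and every other bracket.
-/

open LinearMap (BilinForm ker)
open LieAlgebra

section Biorthogonal

variable {R M ι : Type*} [CommRing R] [AddCommGroup M] [Module R M] {B : BilinForm R M}
  [Fintype ι] [DecidableEq ι] {f g : ι → M}

theorem LinearMap.BilinForm.trace_eq_sum_of_biorthogonal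
    (hfg : ∀ i j, B (f i) (g j) = if i = j then 1 else 0)
    (hf : ⊤ ≤ Submodule.span R (Set.range f)) (T : M →ₗ[R] M) :
    LinearMap.trace R M T = ∑ i, B (T (f i)) (g i) := by
  have hli : LinearIndependent R f :=
    .of_pairwise_dual_eq_zero_one f (fun j => B.flip (g j))
      (fun i j hij => by simp [hfg, Ne.symm hij]) (fun i => by simp [hfg])
  let b := Module.Basis.mk hli hf
  have hrepr : ∀ z i, b.repr z i = B z (g i) := by
    intro z i
    conv_rhs => rw [← b.sum_repr z]
    simp [b, hfg]
  rw [LinearMap.trace_eq_matrix_trace R b, Matrix.trace]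
  simp only [LinearMap.toMatrix_apply, Matrix.diag_apply]
  refine Finset.sum_congr rfl fun i _ => ?_
  rw [← hrepr, Module.Basis.mk_apply]

end Biorthogonal

section Isotropic

variable {K M : Type*} [Field K] [AddCommGroup M] [Module K M] {B : BilinForm K M}

theorem LinearMap.BilinForm.exists_apply_eq_one_isotropic [NeZero (2 : K)] (hsymm : B.IsSymm)
    (hB : B.SeparatingLeft) {e : M} (he : e ≠ 0) (hee : B e e = 0) :
    ∃ d, B e d = 1 ∧ B d d = 0 := by
  obtain ⟨y, hy⟩ : ∃ y, B e y ≠ 0 := by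
    by_contra! h
    exact he (hB e h)
  refine ⟨(B e y)⁻¹ • y - ((B e y)⁻¹ ^ 2 * B y y / 2) • e, ?_, ?_⟩
  · simp only [map_sub, map_smul, smul_eq_mul, hee, mul_zero, sub_zero]
    field_simp
  · simp only [map_sub, map_smul, LinearMap.sub_apply, LinearMap.smul_apply, smul_eq_mul, hee,
      hsymm.eq y e]
    field_simp
    ring

theorem LinearMap.BilinForm.sub_smul_sub_smul_mem_ker_inf (hsymm : B.IsSymm) {e d : M}
    (hee : B e e = 0) (hed : B e d = 1) (hdd : B d d = 0) (z : M) :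
    z - B z d • e - B z e • d ∈ ker (B e) ⊓ ker (B d) := by
  have hde : B d e = 1 := hsymm.eq d e ▸ hed
  simp only [Submodule.mem_inf, LinearMap.mem_ker, map_sub, map_smul, smul_eq_mul, hee, hed, hde,
    hdd, hsymm.eq e z, hsymm.eq d z]
  constructor <;> ring

theorem LinearMap.sub_smul_mem_ker (π : M →ₗ[K] K) (e w : M) : π e • w - π w • e ∈ ker π := by
  simp only [LinearMap.mem_ker, map_sub, map_smul, smul_eq_mul]
  ring

theorem LinearMap.BilinForm.apply_sub_smul_self (hsymm : B.IsSymm) (π : M →ₗ[K] K) {e w : M}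
    (hee : B e e = 0) (hw : B w e = 0) :
    B (π e • w - π w • e) (π e • w - π w • e) = π e ^ 2 * B w w := by
  simp only [map_sub, map_smul, LinearMap.sub_apply, LinearMap.smul_apply, smul_eq_mul, hee, hw,
    hsymm.eq e w]
  ring

end Isotropic

section Lorentzian

variable {K M : Type*} [Field K] [LinearOrder K] [AddCommGroup M] [Module K M]
  {B : BilinForm K M} {π : M →ₗ[K] K} {e w : M}

theorem LinearMap.BilinForm.mem_span_singleton_of_isOrtho_isotropic (hsymm : B.IsSymm)
    (hpos : ∀ v ∈ ker π, v ≠ 0 → 0 < B v v) (he : e ≠ 0) (hee : B e e = 0)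
    (hw : B w e = 0) (hww : B w w = 0) : w ∈ K ∙ e := by
  have hzero : π e • w - π w • e = 0 := by
    by_contra h0
    have := hpos _ (π.sub_smul_mem_ker e w) h0
    rw [B.apply_sub_smul_self hsymm π hee hw, hww, mul_zero] at this
    exact this.false
  rw [sub_eq_zero] at hzero
  have hπe : π e ≠ 0 := fun h => (hpos e h he).ne' hee
  refine Submodule.mem_span_singleton.mpr ⟨(π e)⁻¹ * π w, ?_⟩
  rw [mul_smul, ← hzero, smul_smul, inv_mul_cancel₀ hπe, one_smul]

variable [IsStrictOrderedRing K]

theorem LinearMap.BilinForm.apply_self_pos_of_repr_eq_zero {ι : Type*} [Fintype ι]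
    [DecidableEq ι] (b : Module.Basis ι K M) {s : ι → K}
    (hb : ∀ i j, B (b i) (b j) = if i = j then s i else 0) {i₀ : ι} (hs : ∀ i ≠ i₀, 0 < s i)
    {v : M} (hv : b.repr v i₀ = 0) (hv0 : v ≠ 0) : 0 < B v v := by
  have hsum : B v v = ∑ i, s i * b.repr v i ^ 2 := by
    rw [← B.sum_repr_mul_repr_mul b v v, Finsupp.sum_fintype _ _ (by simp)]
    refine Finset.sum_congr rfl fun i _ => ?_
    rw [Finsupp.sum_fintype _ _ (by simp)]
    simp only [hb, smul_eq_mul, mul_ite, mul_zero, Finset.sum_ite_eq, Finset.mem_univ, ↓reduceIte]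
    ring
  have hterm : ∀ i, 0 ≤ s i * b.repr v i ^ 2 := fun i => by
    by_cases hi : i = i₀
    · simp [hi, hv]
    · exact mul_nonneg (hs i hi).le (sq_nonneg _)
  obtain ⟨i, hi⟩ : ∃ i, b.repr v i ≠ 0 := by
    by_contra! h
    exact hv0 (b.repr.map_eq_zero_iff.mp (Finsupp.ext h))
  have hii₀ : i ≠ i₀ := by rintro rfl; exact hi hv
  rw [hsum]
  exact Finset.sum_pos' (fun i _ => hterm i)
    ⟨i, Finset.mem_univ _, mul_pos (hs i hii₀) (by positivity)⟩

theorem LinearMap.BilinForm.apply_self_nonneg_of_isOrtho_isotropic (hsymm : B.IsSymm)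
    (hpos : ∀ v ∈ ker π, v ≠ 0 → 0 < B v v) (he : e ≠ 0) (hee : B e e = 0)
    (hw : B w e = 0) : 0 ≤ B w w := by
  have hnonneg : 0 ≤ π e ^ 2 * B w w := by
    rw [← B.apply_sub_smul_self hsymm π hee hw]
    by_cases h0 : π e • w - π w • e = 0
    · simp [h0]
    · exact (hpos _ (π.sub_smul_mem_ker e w) h0).le
  have hπe : π e ≠ 0 := fun h => (hpos e h he).ne' hee
  exact nonneg_of_mul_nonneg_right hnonneg (by positivity)

theorem LinearMap.BilinForm.apply_self_pos_of_mem_ker_inf (hsymm : B.IsSymm)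
    (hpos : ∀ v ∈ ker π, v ≠ 0 → 0 < B v v) (he : e ≠ 0) (hee : B e e = 0) {d : M}
    (hed : B e d = 1) (hw : w ∈ ker (B e) ⊓ ker (B d)) (hw0 : w ≠ 0) :
    0 < B w w := by
  have hwe : B w e = 0 := (hsymm.eq w e).trans hw.1
  refine (B.apply_self_nonneg_of_isOrtho_isotropic hsymm hpos he hee hwe).lt_of_ne fun hww => hw0 ?_
  obtain ⟨c, rfl⟩ := Submodule.mem_span_singleton.mp
    (B.mem_span_singleton_of_isOrtho_isotropic hsymm hpos he hee hwe hww.symm)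
  have hc : c = 0 := by simpa [hsymm.eq d e, hed] using hw.2
  simp [hc]

end Lorentzian

section MetricLie

variable {R L : Type*} [CommRing R] [LieRing L] [LieAlgebra R L] {B : BilinForm R L}

theorem LieAlgebra.lie_mem_derivedSeries_one (x y : L) : ⁅x, y⁆ ∈ derivedSeries R L 1 := by
  rw [derivedSeries_def, derivedSeriesOfIdeal_succ, derivedSeriesOfIdeal_zero]
  exact LieSubmodule.lie_mem_lie (LieSubmodule.mem_top x) (LieSubmodule.mem_top y)

theorem LinearMap.BilinForm.orthogonal_derivedSeries_one_le_center (hB : B.SeparatingRight)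
    (hinv : B.lieInvariant L) :
    B.orthogonal (derivedSeries R L 1 : Submodule R L) ≤ (center R L : Submodule R L) :=
  fun z hz => (LieModule.mem_maxTrivSubmodule R L L z).mpr fun x =>
    hB _ fun y => by rw [← neg_eq_zero, ← hinv, hz _ (lie_mem_derivedSeries_one x y)]

theorem LieAlgebra.derivedSeries_one_le_lie_of_sup_center_eq_top {I : LieIdeal R L}
    (h : I ⊔ center R L = ⊤) : derivedSeries R L 1 ≤ ⁅I, I⁆ := by
  have hC : ∀ J : LieIdeal R L, ⁅J, center R L⁆ = ⊥ := fun J =>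
    (LieSubmodule.lie_eq_bot_iff _ _).mpr fun x _ z hz =>
      (LieModule.mem_maxTrivSubmodule R L L z).mp hz x
  rw [derivedSeries_def, derivedSeriesOfIdeal_succ, derivedSeriesOfIdeal_zero, ← h,
    LieSubmodule.lie_sup, LieSubmodule.sup_lie, LieSubmodule.sup_lie, hC, hC,
    LieSubmodule.lie_comm (center R L) I, hC]
  simp

theorem LieIdeal.eq_bot_of_le_lie_self [IsSolvable L] {I : LieIdeal R L} (h : I ≤ ⁅I, I⁆) :
    I = ⊥ := by
  have hle : ∀ k, I ≤ derivedSeries R L k := by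
    intro k
    induction k with
    | zero => exact le_top
    | succ k ih =>
      rw [derivedSeries_def, derivedSeriesOfIdeal_succ]
      exact h.trans (LieSubmodule.mono_lie ih ih)
  obtain ⟨k, hk⟩ := IsSolvable.solvable R L
  exact le_bot_iff.mp (hk ▸ hle k)

theorem LinearMap.BilinForm.killingForm_apply_self_eq_neg_sum (hinv : B.lieInvariant L)
    {ι : Type*} [Fintype ι] [DecidableEq ι] {f g : ι → L}
    (hfg : ∀ i j, B (f i) (g j) = if i = j then 1 else 0)
    (hf : ⊤ ≤ Submodule.span R (Set.range f)) (x : L) :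
    killingForm R L x x = -∑ i, B ⁅x, f i⁆ ⁅x, g i⁆ := by
  rw [killingForm_apply_apply, B.trace_eq_sum_of_biorthogonal hfg hf, ← Finset.sum_neg_distrib]
  exact Finset.sum_congr rfl fun i _ => hinv x _ _

end MetricLie

section MetricLieField

variable {K L : Type*} [Field K] [LieRing L] [LieAlgebra K L] {B : BilinForm K L}

theorem LinearMap.BilinForm.isLieAbelian_of_disjoint_orthogonal_derivedSeries_one
    [FiniteDimensional K L] [IsSolvable L] (hrefl : B.IsRefl) (hB : B.SeparatingRight)
    (hinv : B.lieInvariant L)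
    (hW : Disjoint (derivedSeries K L 1 : Submodule K L) (B.orthogonal (derivedSeries K L 1))) :
    IsLieAbelian L := by
  have hsup : derivedSeries K L 1 ⊔ center K L = ⊤ := by
    rw [← LieSubmodule.toSubmodule_inj, LieSubmodule.sup_toSubmodule,
      LieSubmodule.top_toSubmodule, eq_top_iff,
      ← ((B.isCompl_orthogonal_iff_disjoint hrefl).mpr hW).sup_eq_top]
    exact sup_le_sup_left (B.orthogonal_derivedSeries_one_le_center hB hinv) _
  have hbot : derivedSeries K L 1 = ⊥ :=
    LieIdeal.eq_bot_of_le_lie_self (derivedSeries_one_le_lie_of_sup_center_eq_top hsup)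
  exact ⟨fun x y => (LieSubmodule.mem_bot _).mp (hbot ▸ lie_mem_derivedSeries_one (R := K) x y)⟩

theorem LinearMap.BilinForm.killingForm_apply_self_eq_neg_sum_of_isotropic_central
    (hsymm : B.IsSymm) (hinv : B.lieInvariant L) {e d : L} (hee : B e e = 0) (hed : B e d = 1)
    (hdd : B d d = 0) (hcen : ∀ x : L, ⁅x, e⁆ = 0) {ι : Type*} [Fintype ι] [DecidableEq ι]
    (v : Module.Basis ι K ↥(ker (B e) ⊓ ker (B d)))
    (hv : (B.restrict _).IsOrthoᵢ v) (hvv : ∀ k, B (v k) (v k) ≠ 0) (x : L) :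
    killingForm K L x x = -∑ k, (B (v k) (v k))⁻¹ * B ⁅x, (v k : L)⁆ ⁅x, (v k : L)⁆ := by
  have hde : B d e = 1 := hsymm.eq d e ▸ hed
  have hvE : ∀ k, B e (v k) = 0 ∧ B d (v k) = 0 := fun k => (v k).2
  let f : Fin 2 ⊕ ι → L := Sum.elim ![e, d] fun k => v k
  let g : Fin 2 ⊕ ι → L := Sum.elim ![d, e] fun k => (B (v k) (v k))⁻¹ • (v k : L)
  have hfg : ∀ i j, B (f i) (g j) = if i = j then 1 else 0 := by
    rintro (i | k) (j | l)
    · fin_cases i <;> fin_cases j <;> simp [f, g, hee, hed, hde, hdd]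
    · fin_cases i <;> simp [f, g, hvE]
    · fin_cases j <;> simp [f, g, hsymm.eq _ e, hsymm.eq _ d, hvE]
    · by_cases hkl : k = l
      · subst hkl; simp [f, g, inv_mul_cancel₀ (hvv k)]
      · simp [f, g, hkl, show B (v k) (v l) = 0 from hv hkl]
  have hf : ⊤ ≤ Submodule.span K (Set.range f) := by
    have hE : ker (B e) ⊓ ker (B d) ≤ Submodule.span K (Set.range f) := by
      rw [← Submodule.map_subtype_top (ker (B e) ⊓ ker (B d)), ← v.span_eq,
        Submodule.map_span, ← Set.range_comp]
      exact Submodule.span_mono (Set.range_subset_iff.mpr fun k => ⟨Sum.inr k, rfl⟩)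
    intro z _
    have hz : z = (z - B z d • e - B z e • d) + B z d • e + B z e • d := by abel
    rw [hz]
    refine add_mem (add_mem (hE (B.sub_smul_sub_smul_mem_ker_inf hsymm hee hed hdd z)) ?_) ?_
    · exact Submodule.smul_mem _ _ (Submodule.subset_span ⟨Sum.inl 0, rfl⟩)
    · exact Submodule.smul_mem _ _ (Submodule.subset_span ⟨Sum.inl 1, rfl⟩)
  rw [B.killingForm_apply_self_eq_neg_sum hinv hfg hf x]
  simp [f, g, Fintype.sum_sum_type, Fin.sum_univ_two, hcen]

theorem LinearMap.BilinForm.isLieAbelian_of_lie_mem_span_singleton [NeZero (2 : K)]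
    (hsymm : B.IsSymm) (hinv : B.lieInvariant L) {e d : L} (hee : B e e = 0) (hed : B e d = 1)
    (hdd : B d d = 0) (hcen : ∀ x : L, ⁅x, e⁆ = 0)
    (hE : ∀ x : L, ∀ v ∈ ker (B e) ⊓ ker (B d), ⁅x, v⁆ ∈ K ∙ e) :
    IsLieAbelian L := by
  have hzero : ∀ w ∈ K ∙ e, B w d = 0 → w = 0 := by
    intro w hw hwd
    obtain ⟨c, rfl⟩ := Submodule.mem_span_singleton.mp hw
    simp_all
  have hlie : ∀ x z : L, ⁅x, z⁆ = ⁅x, z - B z d • e - B z e • d⁆ + B z e • ⁅x, d⁆ := by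
    intro x z
    simp [lie_sub, lie_smul, hcen]
  have hd : ∀ x : L, ⁅x, d⁆ = 0 := by
    intro x
    refine hzero _ ?_ ?_
    · rw [← lie_skew, hlie d x, lie_self, smul_zero, add_zero]
      exact neg_mem (hE _ _ (B.sub_smul_sub_smul_mem_ker_inf hsymm hee hed hdd x))
    · have h := hinv x d d
      rw [hsymm.eq d] at h
      exact (mul_eq_zero.mp (by linear_combination h : (2 : K) * B ⁅x, d⁆ d = 0)).resolve_left
        two_ne_zero
  refine ⟨fun x z => hzero _ ?_ ?_⟩
  · rw [hlie, hd, smul_zero, add_zero]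
    exact hE _ _ (B.sub_smul_sub_smul_mem_ker_inf hsymm hee hed hdd z)
  · rw [hinv, hd, map_zero, neg_zero]

end MetricLieField

section LorentzianLie

variable {K L : Type*} [Field K] [LinearOrder K] [IsStrictOrderedRing K] [LieRing L]
  [LieAlgebra K L] [FiniteDimensional K L] {B : BilinForm K L} {π : L →ₗ[K] K} {e : L}

theorem LinearMap.BilinForm.lie_mem_span_singleton_of_killingForm_eq_zero (hsymm : B.IsSymm)
    (hinv : B.lieInvariant L) (hkill : killingForm K L = 0)
    (hpos : ∀ v ∈ ker π, v ≠ 0 → 0 < B v v) (he : e ≠ 0) (hee : B e e = 0)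
    (hcen : ∀ x : L, ⁅x, e⁆ = 0) {d : L} (hed : B e d = 1) (hdd : B d d = 0) (x : L) {v : L}
    (hv : v ∈ ker (B e) ⊓ ker (B d)) : ⁅x, v⁆ ∈ K ∙ e := by
  have : Invertible (2 : K) := invertibleOfNonzero two_ne_zero
  obtain ⟨u, hu⟩ := LinearMap.BilinForm.exists_orthogonal_basis
    (LinearMap.BilinForm.isSymm_iff.mp (hsymm.restrict (ker (B e) ⊓ ker (B d))))
  have hupos : ∀ k, 0 < B (u k) (u k) := fun k =>
    B.apply_self_pos_of_mem_ker_inf hsymm hpos he hee hed (u k).2 (by simpa using u.ne_zero k)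
  have hsum := B.killingForm_apply_self_eq_neg_sum_of_isotropic_central hsymm hinv hee hed hdd
    hcen u hu (fun k => (hupos k).ne') x
  rw [hkill, LinearMap.zero_apply, LinearMap.zero_apply, zero_eq_neg] at hsum
  have hperp : ∀ y, B ⁅x, y⁆ e = 0 := fun y => by rw [hinv, hcen, map_zero, neg_zero]
  have hnonneg : ∀ y, 0 ≤ B ⁅x, y⁆ ⁅x, y⁆ := fun y =>
    B.apply_self_nonneg_of_isOrtho_isotropic hsymm hpos he hee (hperp y)
  have hbasis : ∀ k, ⁅x, (u k : L)⁆ ∈ K ∙ e := by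
    intro k
    have hk := (Finset.sum_eq_zero_iff_of_nonneg fun k _ =>
      mul_nonneg (inv_nonneg.mpr (hupos k).le) (hnonneg _)).mp hsum k (Finset.mem_univ k)
    exact B.mem_span_singleton_of_isOrtho_isotropic hsymm hpos he hee (hperp _)
      ((mul_eq_zero.mp hk).resolve_left (inv_ne_zero (hupos k).ne'))
  have hspan : (⊤ : Submodule K _) ≤
      (K ∙ e).comap (ad K L x ∘ₗ (ker (B e) ⊓ ker (B d)).subtype) := by
    rw [← u.span_eq, Submodule.span_le]
    rintro _ ⟨k, rfl⟩
    exact hbasis k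
  exact hspan (Submodule.mem_top (x := ⟨v, hv⟩))

theorem LinearMap.BilinForm.isLieAbelian_of_killingForm_eq_zero_of_isotropic_central
    (hsymm : B.IsSymm) (hB : B.SeparatingLeft) (hinv : B.lieInvariant L)
    (hkill : killingForm K L = 0) (hpos : ∀ v ∈ ker π, v ≠ 0 → 0 < B v v) (he : e ≠ 0)
    (hee : B e e = 0) (hcen : ∀ x : L, ⁅x, e⁆ = 0) : IsLieAbelian L := by
  obtain ⟨d, hed, hdd⟩ := B.exists_apply_eq_one_isotropic hsymm hB he hee
  exact B.isLieAbelian_of_lie_mem_span_singleton hsymm hinv hee hed hdd hcen fun x _ hv =>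
    B.lie_mem_span_singleton_of_killingForm_eq_zero hsymm hinv hkill hpos he hee hcen hed hdd x hv

end LorentzianLie

theorem stmt_4_general (L : Type*) [LieRing L] [LieAlgebra ℝ L] [FiniteDimensional ℝ L]
    [LieAlgebra.IsSolvable L]
    (B : LinearMap.BilinForm ℝ L)
    (hsymm : ∀ x y : L, B x y = B y x)
    (hnondeg : B.Nondegenerate)
    (hinv : ∀ x y z : L, B ⁅x, y⁆ z = - B y ⁅x, z⁆)
    (hkilling : killingForm ℝ L = 0)
    (n : ℕ)
    (hLorentz : ∃ b : Module.Basis (Fin n) ℝ L,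
      ∀ i j, B (b i) (b j) =
        if i = j then (if (i : ℕ) + 1 = n then -1 else 1) else 0) :
    IsLieAbelian L := by
  obtain ⟨b, hb⟩ := hLorentz
  have hB : B.IsSymm := ⟨hsymm⟩
  set W : Submodule ℝ L := derivedSeries ℝ L 1
  by_cases hW : Disjoint W (B.orthogonal W)
  · exact B.isLieAbelian_of_disjoint_orthogonal_derivedSeries_one hB.isRefl hnondeg.2 hinv hW
  obtain ⟨e, heW, heW', he⟩ : ∃ e ∈ W, e ∈ B.orthogonal W ∧ e ≠ 0 := by
    simpa [Submodule.disjoint_def] using hW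
  have : Nontrivial L := ⟨⟨e, 0, he⟩⟩
  obtain ⟨m, rfl⟩ : ∃ m, n = m + 1 :=
    Nat.exists_eq_add_one.mpr (Fin.pos_iff_nonempty.mpr b.index_nonempty)
  refine B.isLieAbelian_of_killingForm_eq_zero_of_isotropic_central hB hnondeg.1 hinv hkilling
    (π := b.coord (Fin.last m)) (fun v hv hv0 => B.apply_self_pos_of_repr_eq_zero b
      (s := fun i => if (i : ℕ) + 1 = m + 1 then -1 else 1) hb (fun i hi => ?_) hv hv0) he
    (heW' e heW) (fun x => B.orthogonal_derivedSeries_one_le_center hnondeg.2 hinv heW' x)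
  rw [if_neg (by have := Fin.val_lt_last hi; omega)]
  exact one_pos

/-- A solvable metric Lie algebra with vanishing Killing form whose scalar
product is Lorentzian (signature `(dim 𝔤 − 1, 1)`) is abelian. -/
theorem stmt_4 (L : Type*) [LieRing L] [LieAlgebra ℝ L] [FiniteDimensional ℝ L]
    [LieAlgebra.IsSolvable L]
    (B : LinearMap.BilinForm ℝ L)
    (hsymm : ∀ x y : L, B x y = B y x)
    (hnondeg : B.Nondegenerate)
    (hinv : ∀ x y z : L, B ⁅x, y⁆ z = - B y ⁅x, z⁆)
    (hkilling : killingForm ℝ L = 0)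
    (n : ℕ) (hdim : Module.finrank ℝ L = n)
    (hLorentz : ∃ b : Module.Basis (Fin n) ℝ L,
      ∀ i j, B (b i) (b j) =
        if i = j then (if (i : ℕ) + 1 = n then -1 else 1) else 0) :
    IsLieAbelian L :=
  stmt_4_general L B hsymm hnondeg hinv hkilling n hLorentz
end

section
/- Let (𝔤, ⟨·,·⟩) be a solvable metric Lie algebra and 𝔫 its nilradical. Then the ideal 𝔧₀ = 𝔷(𝔫) ∩ [𝔤,𝔫] is totally isotropic: ⟨u,v⟩ = 0 for all u, v ∈ 𝔷(𝔫) ∩ [𝔤,𝔫]. -/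
/-!
Invariance lets a bracket be moved across the form: for `u` commuting with `m`,
`⟨u, [x, m]⟩ = -⟨[x, u], m⟩ = ⟨[u, x], m⟩ = -⟨x, [u, m]⟩ = 0`.
Hence the centralizer of `𝔫` is orthogonal to `[𝔤, 𝔫]`, and `𝔷(𝔫) ∩ [𝔤, 𝔫]` lies in both.
-/

namespace LinearMap.BilinForm.lieInvariant

variable {R L : Type*} [CommRing R] [LieRing L] [Module R L] {B : LinearMap.BilinForm R L}

lemma apply_lie_eq_zero_of_lie_eq_zero (hB : B.lieInvariant L) {u m : L} (h : ⁅u, m⁆ = 0)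
    (x : L) : B u ⁅x, m⁆ = 0 :=
  calc B u ⁅x, m⁆ = -B ⁅x, u⁆ m := by rw [hB x u m, neg_neg]
    _ = B ⁅u, x⁆ m := by rw [← lie_skew u x, map_neg, LinearMap.neg_apply]
    _ = 0 := by rw [hB, h, map_zero, neg_zero]

lemma apply_eq_zero_of_mem_span_lie (hB : B.lieInvariant L) {s : Set L} {u : L}
    (hu : ∀ m ∈ s, ⁅u, m⁆ = 0) {v : L}
    (hv : v ∈ Submodule.span R {z : L | ∃ x : L, ∃ m ∈ s, z = ⁅x, m⁆}) : B u v = 0 := by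
  suffices Submodule.span R {z : L | ∃ x : L, ∃ m ∈ s, z = ⁅x, m⁆} ≤ LinearMap.ker (B u) from
    this hv
  rw [Submodule.span_le]
  rintro _ ⟨x, m, hm, rfl⟩
  exact hB.apply_lie_eq_zero_of_lie_eq_zero (hu m hm) x

end LinearMap.BilinForm.lieInvariant

theorem stmt_12_general (L : Type*) [LieRing L] [LieAlgebra ℝ L]
    (B : LinearMap.BilinForm ℝ L)
    (hinv : ∀ x y z : L, B ⁅x, y⁆ z = - B y ⁅x, z⁆)
    (n : LieIdeal ℝ L) :
    ∀ u v : L,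
      u ∈ n → (∀ m ∈ n, ⁅u, m⁆ = (0 : L)) →
      u ∈ Submodule.span ℝ {z : L | ∃ x : L, ∃ m ∈ n, z = ⁅x, m⁆} →
      v ∈ n → (∀ m ∈ n, ⁅v, m⁆ = (0 : L)) →
      v ∈ Submodule.span ℝ {z : L | ∃ x : L, ∃ m ∈ n, z = ⁅x, m⁆} →
      B u v = 0 := by
  intro u v _ hu_central _ _ _ hv_span
  exact LinearMap.BilinForm.lieInvariant.apply_eq_zero_of_mem_span_lie hinv hu_central hv_span

/-- In a solvable metric Lie algebra with nilradical `𝔫`, the ideal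
`𝔧₀ = 𝔷(𝔫) ∩ [𝔤,𝔫]` is totally isotropic. -/
theorem stmt_12 (L : Type*) [LieRing L] [LieAlgebra ℝ L] [FiniteDimensional ℝ L]
    [LieAlgebra.IsSolvable L]
    (B : LinearMap.BilinForm ℝ L)
    (hsymm : ∀ x y : L, B x y = B y x)
    (hnondeg : B.Nondegenerate)
    (hinv : ∀ x y z : L, B ⁅x, y⁆ z = - B y ⁅x, z⁆)
    (n : LieIdeal ℝ L)
    (hn_nilp : LieRing.IsNilpotent n)
    (hn_max : ∀ m : LieIdeal ℝ L, LieRing.IsNilpotent m → m ≤ n) :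
    ∀ u v : L,
      u ∈ n → (∀ m ∈ n, ⁅u, m⁆ = (0 : L)) →
      u ∈ Submodule.span ℝ {z : L | ∃ x : L, ∃ m ∈ n, z = ⁅x, m⁆} →
      v ∈ n → (∀ m ∈ n, ⁅v, m⁆ = (0 : L)) →
      v ∈ Submodule.span ℝ {z : L | ∃ x : L, ∃ m ∈ n, z = ⁅x, m⁆} →
      B u v = 0 :=
  stmt_12_general L B hinv n
end

section
/- Let (𝔤, ⟨·,·⟩) be a solvable metric Lie algebra and 𝔫 its nilradical. Then 𝔤 is abelian if and only if 𝔷(𝔫) ∩ [𝔤,𝔫] = 0. -/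
/-!
If `𝔷(𝔫) ∩ [𝔤,𝔫] = 0` then `[𝔤,𝔫] = 0`, because a nonzero ideal of `𝔤` inside the nilpotent
ideal `𝔫` is a nilpotent `𝔫`-module and so contains a nonzero vector killed by `𝔫`. Thus `𝔫` is
central. An ideal `M` with `[M,M]` central is nilpotent, hence lies in `𝔫` and is central itself;
walking down the derived series of the solvable `𝔤` shows that `𝔤` is central, i.e. abelian.
-/

open LieAlgebra LieModule

section

variable {R L : Type*} [CommRing R] [LieRing L] [LieAlgebra R L]

theorem LieIdeal.isNilpotent_of_lie_self_le_center {M : LieIdeal R L}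
    (hM : ⁅M, M⁆ ≤ center R L) : LieRing.IsNilpotent M := by
  have hlcs : lowerCentralSeries R M M 1 ≤ maxTrivSubmodule R M M := by
    rw [lowerCentralSeries_succ, lowerCentralSeries_zero, LieSubmodule.lie_le_iff]
    intro x _ y _
    rw [mem_maxTrivSubmodule]
    intro z
    have : ⁅(x : L), (y : L)⁆ ∈ center R L := hM (LieSubmodule.lie_coe_mem_lie x y)
    exact Subtype.ext ((mem_maxTrivSubmodule R L L _).mp this z)
  refine (isNilpotent_iff R M M).mpr ⟨2, ?_⟩
  rw [lowerCentralSeries_succ, ← le_bot_iff, ← ideal_oper_maxTrivSubmodule_eq_bot R M M ⊤]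
  exact LieSubmodule.mono_lie_right ⊤ hlcs

theorem LieIdeal.eq_bot_of_le_nilpotent_of_forall_lie_eq_zero {n J : LieIdeal R L}
    [LieRing.IsNilpotent n] (hJ : J ≤ n) (h : ∀ u ∈ J, (∀ m ∈ n, ⁅u, m⁆ = 0) → u = 0) : J = ⊥ := by
  let I : LieIdeal R n := LieIdeal.comap n.incl J
  have : LieModule.IsNilpotent n (⊤ : LieIdeal R n) := (isNilpotent_of_top_iff' (R := R)).mpr ‹_›
  have : LieModule.IsNilpotent n I := isNilpotent_of_le R n n I ⊤ le_top
  by_contra hJ_ne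
  have : Nontrivial I := by
    refine (LieSubmodule.nontrivial_iff_ne_bot R n n).mpr fun hI ↦ hJ_ne ?_
    rw [LieSubmodule.eq_bot_iff] at hI ⊢
    exact fun u hu ↦ congrArg Subtype.val (hI ⟨u, hJ hu⟩ hu)
  have := nontrivial_max_triv_of_isNilpotent R n I
  obtain ⟨v, hv⟩ := exists_ne (0 : maxTrivSubmodule R n I)
  refine hv (Subtype.ext (Subtype.ext (Subtype.ext (h _ (v : I).2 fun m hm ↦ ?_))))
  rw [← lie_skew, neg_eq_zero]
  exact congrArg (fun w : I ↦ ((w : n) : L)) ((mem_maxTrivSubmodule R n I _).mp v.2 ⟨m, hm⟩)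

theorem LieAlgebra.isLieAbelian_of_forall_lie_self_le_center [IsSolvable L]
    (h : ∀ M : LieIdeal R L, ⁅M, M⁆ ≤ center R L → M ≤ center R L) : IsLieAbelian L := by
  have descend : ∀ k, derivedSeries R L k ≤ center R L → derivedSeries R L 0 ≤ center R L := by
    intro k
    induction k with
    | zero => exact id
    | succ k ih => exact fun hk ↦ ih (h _ (by rwa [← derivedSeriesOfIdeal_succ]))
  obtain ⟨k, hk⟩ := IsSolvable.solvable R L
  rw [isLieAbelian_iff_center_eq_top R, ← top_le_iff]
  exact descend k (hk ▸ bot_le)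

end

theorem stmt_13_general (L : Type*) [LieRing L] [LieAlgebra ℝ L]
    [LieAlgebra.IsSolvable L]
    (n : LieIdeal ℝ L)
    (hn_nilp : LieRing.IsNilpotent n)
    (hn_max : ∀ m : LieIdeal ℝ L, LieRing.IsNilpotent m → m ≤ n) :
    IsLieAbelian L ↔
      ∀ u : L,
        u ∈ n → (∀ m ∈ n, ⁅u, m⁆ = (0 : L)) →
        u ∈ Submodule.span ℝ {z : L | ∃ x : L, ∃ m ∈ n, z = ⁅x, m⁆} →
        u = 0 := by
  have mem_span_iff (u : L) :
      u ∈ Submodule.span ℝ {z : L | ∃ x : L, ∃ m ∈ n, z = ⁅x, m⁆} ↔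
        u ∈ ⁅(⊤ : LieIdeal ℝ L), n⁆ := by
    rw [← LieSubmodule.mem_toSubmodule, LieSubmodule.lieIdeal_oper_eq_linear_span']
    simp only [LieSubmodule.mem_top, true_and, eq_comm]
  constructor
  · intro _ u _ _ hu
    rwa [mem_span_iff,
      (LieSubmodule.lie_eq_bot_iff n ⊤).mpr fun x _ m _ ↦ trivial_lie_zero L L x m] at hu
  · intro h
    have hn_bracket : ⁅(⊤ : LieIdeal ℝ L), n⁆ = ⊥ :=
      LieIdeal.eq_bot_of_le_nilpotent_of_forall_lie_eq_zero (LieSubmodule.lie_le_right n ⊤)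
        fun u hu hc ↦ h u (LieSubmodule.lie_le_right n ⊤ hu) hc ((mem_span_iff u).mpr hu)
    have hn_center : n ≤ center ℝ L := fun m hm ↦ (mem_maxTrivSubmodule ℝ L L m).mpr
      fun x ↦ (LieSubmodule.lie_eq_bot_iff n ⊤).mp hn_bracket x trivial m hm
    exact isLieAbelian_of_forall_lie_self_le_center fun M hM ↦
      (hn_max M (LieIdeal.isNilpotent_of_lie_self_le_center hM)).trans hn_center

/-- A solvable metric Lie algebra `𝔤` with nilradical `𝔫` is abelian if and
only if `𝔷(𝔫) ∩ [𝔤,𝔫] = 0`. -/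
theorem stmt_13 (L : Type*) [LieRing L] [LieAlgebra ℝ L] [FiniteDimensional ℝ L]
    [LieAlgebra.IsSolvable L]
    (B : LinearMap.BilinForm ℝ L)
    (hsymm : ∀ x y : L, B x y = B y x)
    (hnondeg : B.Nondegenerate)
    (hinv : ∀ x y z : L, B ⁅x, y⁆ z = - B y ⁅x, z⁆)
    (n : LieIdeal ℝ L)
    (hn_nilp : LieRing.IsNilpotent n)
    (hn_max : ∀ m : LieIdeal ℝ L, LieRing.IsNilpotent m → m ≤ n) :
    IsLieAbelian L ↔
      ∀ u : L,
        u ∈ n → (∀ m ∈ n, ⁅u, m⁆ = (0 : L)) →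
        u ∈ Submodule.span ℝ {z : L | ∃ x : L, ∃ m ∈ n, z = ⁅x, m⁆} →
        u = 0 :=
  stmt_13_general L n hn_nilp hn_max
end

section
/- Let (𝔤, ⟨·,·⟩) be a solvable metric Lie algebra and 𝔫 its nilradical. If 𝔤 is not abelian, then there exists a nonzero ideal 𝔦 of 𝔤 with 𝔦 ⊆ 𝔷(𝔫) ∩ [𝔤,𝔫] and 𝔦 ⊆ 𝔷(𝔤); in particular 𝔦 is a nonzero central ideal of 𝔤 that is totally isotropic. -/
/-!
Take `𝔦 = 𝔷(𝔤) ∩ [𝔤,𝔫]`. Invariance and nondegeneracy give `𝔷(𝔤) = [𝔤,𝔤]^⊥`, so `𝔦` is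
central and isotropic, and it lies in `𝔫`. If `𝔦 = 0`, passing to orthogonals gives
`[𝔤,𝔤] + [𝔤,𝔫]^⊥ = 𝔤`, while invariance gives `[𝔤, [𝔤,𝔫]^⊥] ⊆ 𝔫^⊥`. Hence `[𝔤,𝔤]` is perfect
modulo the ideal `𝔫^⊥`, and solvability forces `[𝔤,𝔤] ⊆ 𝔫^⊥`, i.e. `𝔫 ⊆ 𝔷(𝔤)`. But in a solvable
Lie algebra all of whose nilpotent ideals are central, an ideal with central derived algebra is
nilpotent, so descending the derived series shows that every term is central, and `𝔤` is abelian.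
-/

open LieAlgebra LieModule LieSubmodule

section Solvable

variable {R L : Type*} [CommRing R] [LieRing L] [LieAlgebra R L]

theorem LieIdeal.isNilpotent_of_lie_le_center {I : LieIdeal R L} (h : ⁅I, I⁆ ≤ center R L) :
    LieRing.IsNilpotent I := by
  have hcentral : lowerCentralSeries R I I 1 ≤ maxTrivSubmodule R I I := by
    rw [lowerCentralSeries_succ, lowerCentralSeries_zero, lie_le_iff]
    rintro a - b - c
    exact Subtype.ext ((mem_maxTrivSubmodule R L L _).1 (h (lie_mem_lie a.2 b.2)) c)
  refine (isNilpotent_iff R I I).2 ⟨2, ?_⟩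
  rw [lowerCentralSeries_succ, _root_.eq_bot_iff, ← ideal_oper_maxTrivSubmodule_eq_bot R I I ⊤]
  exact mono_lie_right ⊤ hcentral

theorem LieIdeal.lie_sup_sup_le (I J : LieIdeal R L) :
    ⁅I ⊔ J, I ⊔ J⁆ ≤ ⁅I, I⁆ ⊔ ⁅(⊤ : LieIdeal R L), J⁆ := by
  rw [sup_lie, lie_sup]
  refine sup_le (sup_le le_sup_left (le_sup_of_le_right (mono_lie_left _ le_top))) ?_
  rw [lie_comm]
  exact le_sup_of_le_right (mono_lie_left _ le_top)

variable [IsSolvable L]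

theorem LieAlgebra.isLieAbelian_of_forall_isNilpotent_le_center
    (h : ∀ I : LieIdeal R L, LieRing.IsNilpotent I → I ≤ center R L) : IsLieAbelian L := by
  obtain ⟨k, hk⟩ := IsSolvable.solvable R L
  have hle : derivedSeries R L 0 ≤ center R L := by
    refine Nat.decreasingInduction (motive := fun j _ => derivedSeries R L j ≤ center R L)
      (fun j _ hj => h _ (LieIdeal.isNilpotent_of_lie_le_center ?_)) (by simp [hk]) k.zero_le
    rwa [← derivedSeriesOfIdeal_succ]
  rw [isLieAbelian_iff_center_eq_top R, eq_top_iff]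
  exact hle

theorem LieIdeal.le_of_le_lie_sup {I W : LieIdeal R L} (h : I ≤ ⁅I, I⁆ ⊔ W) : I ≤ W := by
  have key : ∀ k, I ≤ derivedSeriesOfIdeal R L k I ⊔ W := by
    intro k
    induction k with
    | zero => exact le_sup_left
    | succ k ih =>
      calc I ≤ ⁅I, I⁆ ⊔ W := h
        _ ≤ ⁅derivedSeriesOfIdeal R L k I ⊔ W, derivedSeriesOfIdeal R L k I ⊔ W⁆ ⊔ W :=
          sup_le_sup_right (mono_lie ih ih) W
        _ ≤ derivedSeriesOfIdeal R L (k + 1) I ⊔ W := by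
          rw [derivedSeriesOfIdeal_succ]
          refine sup_le ?_ le_sup_right
          exact (LieIdeal.lie_sup_sup_le _ W).trans (sup_le_sup_left (lie_le_right _ _) _)
  obtain ⟨k, hk⟩ := IsSolvable.solvable R L
  have hbot : derivedSeriesOfIdeal R L k I = ⊥ :=
    _root_.eq_bot_iff.2 (hk ▸ derivedSeriesOfIdeal_le le_top le_rfl)
  simpa [hbot] using key k

theorem LieAlgebra.lie_top_top_le_of_sup_eq_top {K W : LieIdeal R L}
    (hK : ⁅(⊤ : LieIdeal R L), K⁆ ≤ W)
    (hDK : ⁅(⊤ : LieIdeal R L), ⊤⁆ ⊔ K = ⊤) : ⁅(⊤ : LieIdeal R L), ⊤⁆ ≤ W := by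
  refine LieIdeal.le_of_le_lie_sup ?_
  set D : LieIdeal R L := ⁅(⊤ : LieIdeal R L), ⊤⁆
  calc D = ⁅D ⊔ K, D ⊔ K⁆ := by rw [hDK]
    _ ≤ ⁅D, D⁆ ⊔ ⁅(⊤ : LieIdeal R L), K⁆ := LieIdeal.lie_sup_sup_le D K
    _ ≤ ⁅D, D⁆ ⊔ W := sup_le_sup_left hK _

end Solvable

namespace LieAlgebra.InvariantForm

section Ring

variable {R L : Type*} [CommRing R] [LieRing L] [LieAlgebra R L]
  {B : LinearMap.BilinForm R L} (hB : B.lieInvariant L)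

theorem center_eq_orthogonal_lie_top_top (hB_sep : B.SeparatingRight) :
    center R L = orthogonal B hB ⁅(⊤ : LieIdeal R L), ⊤⁆ := by
  ext z
  rw [mem_orthogonal, mem_maxTrivSubmodule]
  have hD : (∀ w ∈ (⁅(⊤ : LieIdeal R L), ⊤⁆ : LieIdeal R L), B w z = 0) ↔
      ∀ x y : L, B ⁅x, y⁆ z = 0 := by
    change (⁅(⊤ : LieIdeal R L), ⊤⁆ : LieIdeal R L).toSubmodule ≤
      LinearMap.ker (B.flip z) ↔ _
    rw [lieIdeal_oper_eq_linear_span', Submodule.span_le]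
    simp only [Set.subset_def, mem_top, true_and, Set.mem_ofPred_eq, forall_exists_index]
    exact ⟨fun h x y => h _ x y rfl, fun h _ x y hxy => hxy ▸ h x y⟩
  rw [hD]
  refine forall_congr' fun x => ⟨fun hx y => ?_, fun hx => ?_⟩
  · rw [hB, hx, map_zero, neg_zero]
  · exact hB_sep _ fun y => by rw [← neg_eq_zero, ← hB, hx]

theorem lie_top_orthogonal_lie_le_orthogonal (I : LieIdeal R L) :
    ⁅(⊤ : LieIdeal R L), orthogonal B hB ⁅(⊤ : LieIdeal R L), I⁆⁆ ≤ orthogonal B hB I := by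
  rw [lie_le_iff]
  intro x _ c hc
  rw [mem_orthogonal] at hc ⊢
  intro m hm
  rw [← neg_eq_zero, ← hB]
  exact hc _ (lie_mem_lie (mem_top x) hm)

theorem orthogonal_sup (I J : LieIdeal R L) :
    orthogonal B hB (I ⊔ J) = orthogonal B hB I ⊓ orthogonal B hB J := by
  ext z
  simp only [mem_inf, mem_orthogonal]
  refine ⟨fun h => ⟨fun x hx => h x (mem_sup_left hx), fun x hx => h x (mem_sup_right hx)⟩, ?_⟩
  rintro ⟨hI, hJ⟩ x hx
  obtain ⟨y, hy, w, hw, rfl⟩ := (mem_sup _ _ _).1 hx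
  rw [map_add, LinearMap.add_apply, hI y hy, hJ w hw, add_zero]

theorem le_orthogonal_symm (hB_refl : B.IsRefl) {I J : LieIdeal R L}
    (h : I ≤ orthogonal B hB J) : J ≤ orthogonal B hB I :=
  fun y hy => (mem_orthogonal _ _ _ _).2 fun _ hx =>
    hB_refl _ _ ((mem_orthogonal _ _ _ _).1 (h hx) y hy)

end Ring

section Field

variable {K L : Type*} [Field K] [LieRing L] [LieAlgebra K L] [FiniteDimensional K L]
  {B : LinearMap.BilinForm K L} (hB : B.lieInvariant L)

theorem orthogonal_orthogonal (hB_nondeg : B.Nondegenerate) (hB_refl : B.IsRefl)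
    (I : LieIdeal K L) : orthogonal B hB (orthogonal B hB I) = I :=
  LieSubmodule.toSubmodule_injective (B.orthogonal_orthogonal hB_nondeg hB_refl I.toSubmodule)

theorem sup_orthogonal_eq_top_of_orthogonal_inf_eq_bot (hB_nondeg : B.Nondegenerate)
    (hB_refl : B.IsRefl) {I J : LieIdeal K L} (h : orthogonal B hB I ⊓ J = ⊥) :
    I ⊔ orthogonal B hB J = ⊤ := by
  rw [← orthogonal_orthogonal hB hB_nondeg hB_refl (I ⊔ _), orthogonal_sup,
    orthogonal_orthogonal hB hB_nondeg hB_refl, h]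
  exact LieSubmodule.toSubmodule_injective B.orthogonal_bot

end Field

end LieAlgebra.InvariantForm

theorem stmt_14_general (L : Type*) [LieRing L] [LieAlgebra ℝ L] [FiniteDimensional ℝ L]
    [LieAlgebra.IsSolvable L]
    (B : LinearMap.BilinForm ℝ L)
    (hsymm : ∀ x y : L, B x y = B y x)
    (hnondeg : B.Nondegenerate)
    (hinv : ∀ x y z : L, B ⁅x, y⁆ z = - B y ⁅x, z⁆)
    (n : LieIdeal ℝ L)
    (hn_max : ∀ m : LieIdeal ℝ L, LieRing.IsNilpotent m → m ≤ n)
    (hnotab : ¬ IsLieAbelian L) :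
    ∃ i : LieIdeal ℝ L, i ≠ ⊥ ∧
      (∀ u ∈ i,
        u ∈ n ∧ (∀ m ∈ n, ⁅u, m⁆ = (0 : L)) ∧
        u ∈ Submodule.span ℝ {z : L | ∃ x : L, ∃ m ∈ n, z = ⁅x, m⁆}) ∧
      (∀ u ∈ i, ∀ x : L, ⁅x, u⁆ = (0 : L)) ∧
      (∀ u ∈ i, ∀ v ∈ i, B u v = 0) := by
  have hrefl : B.IsRefl := fun x y h => hsymm x y ▸ h
  have hC := InvariantForm.center_eq_orthogonal_lie_top_top hinv hnondeg.2
  have hne : center ℝ L ⊓ ⁅(⊤ : LieIdeal ℝ L), n⁆ ≠ ⊥ := by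
    intro h
    have hDK := InvariantForm.sup_orthogonal_eq_top_of_orthogonal_inf_eq_bot hinv hnondeg hrefl
      (hC ▸ h)
    have hDn := lie_top_top_le_of_sup_eq_top
      (InvariantForm.lie_top_orthogonal_lie_le_orthogonal hinv n) hDK
    have hnC : n ≤ center ℝ L := hC ▸ InvariantForm.le_orthogonal_symm hinv hrefl hDn
    exact hnotab <|
      isLieAbelian_of_forall_isNilpotent_le_center fun I hI => (hn_max I hI).trans hnC
  refine ⟨_, hne, fun u hu => ⟨?_, ?_, ?_⟩, fun u hu => ?_, fun u hu v hv => ?_⟩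
  · exact lie_le_right n ⊤ hu.2
  · exact fun m _ => by rw [← lie_skew, hu.1 m, neg_zero]
  · have hu' : u ∈ (⁅(⊤ : LieIdeal ℝ L), n⁆ : LieIdeal ℝ L).toSubmodule := hu.2
    rw [lieIdeal_oper_eq_linear_span'] at hu'
    refine Submodule.span_mono ?_ hu'
    rintro _ ⟨x, -, m, hm, rfl⟩
    exact ⟨x, m, hm, rfl⟩
  · exact hu.1
  · have hu' : u ∈ InvariantForm.orthogonal B hinv ⁅(⊤ : LieIdeal ℝ L), ⊤⁆ := hC ▸ hu.1
    exact hrefl _ _ <|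
      (InvariantForm.mem_orthogonal _ _ _ _).1 hu' v (mono_lie_right ⊤ le_top hv.2)

/-- If a solvable metric Lie algebra `𝔤` with nilradical `𝔫` is not abelian,
then there is a nonzero ideal `𝔦` of `𝔤` with `𝔦 ⊆ 𝔷(𝔫) ∩ [𝔤,𝔫]` and `𝔦 ⊆ 𝔷(𝔤)`; in particular
`𝔦` is a nonzero central ideal that is totally isotropic. -/
theorem stmt_14 (L : Type*) [LieRing L] [LieAlgebra ℝ L] [FiniteDimensional ℝ L]
    [LieAlgebra.IsSolvable L]
    (B : LinearMap.BilinForm ℝ L)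
    (hsymm : ∀ x y : L, B x y = B y x)
    (hnondeg : B.Nondegenerate)
    (hinv : ∀ x y z : L, B ⁅x, y⁆ z = - B y ⁅x, z⁆)
    (n : LieIdeal ℝ L)
    (hn_nilp : LieRing.IsNilpotent n)
    (hn_max : ∀ m : LieIdeal ℝ L, LieRing.IsNilpotent m → m ≤ n)
    (hnotab : ¬ IsLieAbelian L) :
    ∃ i : LieIdeal ℝ L, i ≠ ⊥ ∧
      (∀ u ∈ i,
        u ∈ n ∧ (∀ m ∈ n, ⁅u, m⁆ = (0 : L)) ∧
        u ∈ Submodule.span ℝ {z : L | ∃ x : L, ∃ m ∈ n, z = ⁅x, m⁆}) ∧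
      (∀ u ∈ i, ∀ x : L, ⁅x, u⁆ = (0 : L)) ∧
      (∀ u ∈ i, ∀ v ∈ i, B u v = 0) :=
  stmt_14_general L B hsymm hnondeg hinv n hn_max hnotab
end

section
/- Let 𝔤 be a finite-dimensional real Lie algebra that is the direct sum 𝔤 = 𝔨 ⊕ 𝔰 of two ideals 𝔨 and 𝔰, where 𝔰 is semisimple. Let ⟨·,·⟩ be a symmetric bilinear form on 𝔤 that is invariant under 𝔰, i.e. ⟨[s,x],y⟩ = −⟨x,[s,y]⟩ for all s ∈ 𝔰 and x,y ∈ 𝔤, and suppose the radical 𝔤^⊥ = {x ∈ 𝔤 : ⟨x,y⟩ = 0 for all y ∈ 𝔤} contains no nonzero ideal of 𝔤. Then 𝔤^⊥ ⊆ 𝔨; in particular 𝔰 ∩ 𝔤^⊥ = 0. -/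
/-!
Since `𝔨` and `𝔰` are complementary ideals, `[𝔨, 𝔰] ⊆ 𝔨 ∩ 𝔰 = 0`, so `𝔤` acts on `𝔰` through `𝔰`.
Together with the `𝔰`-invariance of `⟨·,·⟩` this makes `𝔰 ∩ 𝔤^⊥` an ideal of `𝔤`, hence zero.
If `x = a + b ∈ 𝔤^⊥` with `a ∈ 𝔨`, `b ∈ 𝔰`, then for `z ∈ 𝔰` the element `[z, x] = [z, b]` lies in
`𝔰 ∩ 𝔤^⊥ = 0`, so `b` is central in `𝔰`; as `𝔰` has trivial radical, `b = 0` and `x ∈ 𝔨`.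
-/

namespace LieIdeal

variable {R L : Type*} [CommRing R] [LieRing L] [LieAlgebra R L]

lemma lie_eq_zero_of_disjoint {I J : LieIdeal R L} (h : Disjoint I J) {x y : L}
    (hx : x ∈ I) (hy : y ∈ J) : ⁅x, y⁆ = 0 := by
  have hxy : ⁅x, y⁆ ∈ I ⊓ J := LieSubmodule.lie_le_inf I J (LieSubmodule.lie_mem_lie hx hy)
  rwa [h.eq_bot, LieSubmodule.mem_bot] at hxy

lemma exists_mem_add_eq_of_isCompl {I J : LieIdeal R L} (h : IsCompl I J) (x : L) :
    ∃ a ∈ I, ∃ b ∈ J, a + b = x := by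
  rw [← LieSubmodule.mem_sup, h.sup_eq_top]
  exact LieSubmodule.mem_top x

lemma exists_lie_eq_lie_of_isCompl {I J : LieIdeal R L} (h : IsCompl I J) (x : L) {y : L}
    (hy : y ∈ J) : ∃ b ∈ J, ⁅x, y⁆ = ⁅b, y⁆ := by
  obtain ⟨a, ha, b, hb, rfl⟩ := exists_mem_add_eq_of_isCompl h x
  exact ⟨b, hb, by rw [add_lie, lie_eq_zero_of_disjoint h.disjoint ha hy, zero_add]⟩

lemma eq_zero_of_forall_lie_eq_zero {J : LieIdeal R L} [LieAlgebra.HasTrivialRadical R J]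
    {b : L} (hb : b ∈ J) (h : ∀ z ∈ J, ⁅z, b⁆ = 0) : b = 0 := by
  have hcenter : (⟨b, hb⟩ : J) ∈ LieAlgebra.center R J := fun z => Subtype.ext (h z z.2)
  rw [LieAlgebra.center_eq_bot, LieSubmodule.mem_bot] at hcenter
  exact congrArg Subtype.val hcenter

end LieIdeal

namespace LinearMap.BilinForm

open LieIdeal

variable {R L : Type*} [CommRing R] [LieRing L] [LieAlgebra R L]
  (B : LinearMap.BilinForm R L) {s : LieIdeal R L}

lemma lie_mem_ker_of_invariant (hinv : ∀ z ∈ s, ∀ x y : L, B ⁅z, x⁆ y = - B x ⁅z, y⁆)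
    {z x : L} (hz : z ∈ s) (hx : x ∈ LinearMap.ker B) : ⁅z, x⁆ ∈ LinearMap.ker B := by
  rw [LinearMap.mem_ker] at hx ⊢
  ext y
  rw [hinv z hz x y, hx, LinearMap.zero_apply, LinearMap.zero_apply, neg_zero]

def lieIdealInfKer {k : LieIdeal R L} (hcompl : IsCompl k s)
    (hinv : ∀ z ∈ s, ∀ x y : L, B ⁅z, x⁆ y = - B x ⁅z, y⁆) : LieIdeal R L where
  toSubmodule := (s : Submodule R L) ⊓ LinearMap.ker B
  lie_mem := by
    rintro x m ⟨hms, hmB⟩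
    obtain ⟨b, hb, hxb⟩ := exists_lie_eq_lie_of_isCompl hcompl x hms
    rw [hxb]
    exact ⟨s.lie_mem hms, lie_mem_ker_of_invariant B hinv hb hmB⟩

lemma eq_zero_of_mem_of_mem_ker {k : LieIdeal R L} (hcompl : IsCompl k s)
    (hinv : ∀ z ∈ s, ∀ x y : L, B ⁅z, x⁆ y = - B x ⁅z, y⁆)
    (hrad : ∀ I : LieIdeal R L, (∀ x ∈ I, ∀ y : L, B x y = 0) → I = ⊥)
    {x : L} (hxs : x ∈ s) (hxB : x ∈ LinearMap.ker B) : x = 0 := by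
  have hbot : lieIdealInfKer B hcompl hinv = ⊥ :=
    hrad _ fun m hm y => by rw [(LinearMap.mem_ker.mp hm.2), LinearMap.zero_apply]
  have hx : x ∈ lieIdealInfKer B hcompl hinv := ⟨hxs, hxB⟩
  rwa [hbot, LieSubmodule.mem_bot] at hx

lemma ker_le_of_isCompl [LieAlgebra.HasTrivialRadical R s] {k : LieIdeal R L}
    (hcompl : IsCompl k s) (hinv : ∀ z ∈ s, ∀ x y : L, B ⁅z, x⁆ y = - B x ⁅z, y⁆)
    (hrad : ∀ I : LieIdeal R L, (∀ x ∈ I, ∀ y : L, B x y = 0) → I = ⊥) :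
    LinearMap.ker B ≤ (k : Submodule R L) := by
  intro x hx
  obtain ⟨a, ha, b, hb, rfl⟩ := exists_mem_add_eq_of_isCompl hcompl x
  suffices b = 0 by rwa [this, add_zero]
  refine eq_zero_of_forall_lie_eq_zero hb fun z hz => ?_
  have hzx : ⁅z, a + b⁆ = ⁅z, b⁆ := by
    rw [lie_add, ← lie_skew, lie_eq_zero_of_disjoint hcompl.disjoint ha hz, neg_zero, zero_add]
  rw [← hzx]
  exact eq_zero_of_mem_of_mem_ker B hcompl hinv hrad
    (hzx ▸ s.lie_mem hb) (lie_mem_ker_of_invariant B hinv hz hx)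

end LinearMap.BilinForm

theorem stmt_16_general (L : Type*) [LieRing L] [LieAlgebra ℝ L]
    (k s : LieIdeal ℝ L)
    (hinf : k ⊓ s = ⊥) (hsup : k ⊔ s = ⊤)
    (hss : LieAlgebra.HasTrivialRadical ℝ s)
    (B : LinearMap.BilinForm ℝ L)
    (hinv : ∀ z ∈ s, ∀ x y : L, B ⁅z, x⁆ y = - B x ⁅z, y⁆)
    (hrad : ∀ I : LieIdeal ℝ L, (∀ x ∈ I, ∀ y : L, B x y = 0) → I = ⊥) :
    (∀ x : L, (∀ y : L, B x y = 0) → x ∈ k) ∧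
    (∀ x : L, x ∈ s → (∀ y : L, B x y = 0) → x = 0) := by
  have hcompl : IsCompl k s := ⟨disjoint_iff.mpr hinf, codisjoint_iff.mpr hsup⟩
  have mem_ker {x : L} (hx : ∀ y, B x y = 0) : x ∈ LinearMap.ker B :=
    LinearMap.mem_ker.mpr (LinearMap.ext hx)
  exact ⟨fun x hx => LinearMap.BilinForm.ker_le_of_isCompl B hcompl hinv hrad (mem_ker hx),
    fun x hxs hx =>
      LinearMap.BilinForm.eq_zero_of_mem_of_mem_ker B hcompl hinv hrad hxs (mem_ker hx)⟩

/-- Let `𝔤 = 𝔨 ⊕ 𝔰` be a direct sum of ideals with `𝔰` semisimple, and let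
`⟨·,·⟩` be a symmetric bilinear form invariant under `𝔰` whose radical `𝔤^⊥` contains no
nonzero ideal of `𝔤`. Then `𝔤^⊥ ⊆ 𝔨`; in particular `𝔰 ∩ 𝔤^⊥ = 0`. -/
theorem stmt_16 (L : Type*) [LieRing L] [LieAlgebra ℝ L] [FiniteDimensional ℝ L]
    (k s : LieIdeal ℝ L)
    (hinf : k ⊓ s = ⊥) (hsup : k ⊔ s = ⊤)
    (hss : LieAlgebra.HasTrivialRadical ℝ s)
    (B : LinearMap.BilinForm ℝ L)
    (hsymm : ∀ x y : L, B x y = B y x)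
    (hinv : ∀ z ∈ s, ∀ x y : L, B ⁅z, x⁆ y = - B x ⁅z, y⁆)
    (hrad : ∀ I : LieIdeal ℝ L, (∀ x ∈ I, ∀ y : L, B x y = 0) → I = ⊥) :
    (∀ x : L, (∀ y : L, B x y = 0) → x ∈ k) ∧
    (∀ x : L, x ∈ s → (∀ y : L, B x y = 0) → x = 0) :=
  stmt_16_general L k s hinf hsup hss B hinv hrad
end

section
/- Let (𝔤, ⟨·,·⟩) be a metric Lie algebra and a ∈ 𝔤 an element such that ad(a) is not nilpotent and trace(ad(a)²) = 0. Let ad(a) = S + N be the Jordan–Chevalley decomposition of ad(a), with S semisimple, N nilpotent and SN = NS. Then the subspace W₁ = im(S) satisfies dim W₁ ≥ 4, the restriction of ⟨·,·⟩ to W₁ is nondegenerate, and W₁ contains a nonzero vector v with ⟨v,v⟩ = 0 (so the restriction of ⟨·,·⟩ to W₁ is indefinite). -/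
/-!
Skew-adjointness of `ad a` passes to its semisimple part `S`: the adjoints of `S` and `N` form a
Jordan–Chevalley decomposition of `-(S + N)`, so by uniqueness the adjoint of `S` is `-S`. Hence
`(im S)ᗮ = ker S`, which is a complement of `im S` because `S` is semisimple, and the form is
nondegenerate on `W₁ = im S`. There `S` restricts to an injective skew map `T` with
`tr T² = tr (ad a)² = 0`. Transported to the dual by the form, `-T` becomes the transpose of `T`,
so `tr T = 0` and `det T = (-1) ^ dim W₁ * det T`: the dimension is even, and it is not `2` since
in dimension two `tr T² = (tr T)² - 2 det T`. Finally, a real form without isotropic vectors is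
definite, and then `tr T² = -∑ ⟨T vᵢ, T vᵢ⟩ / ⟨vᵢ, vᵢ⟩ < 0` in an orthogonal basis `(vᵢ)`.
-/

open Module Polynomial LinearMap

namespace LinearMap

section CommRing

variable {R M : Type*} [CommRing R] [AddCommGroup M] [Module R M]
  {B : LinearMap.BilinForm R M} {f g : Module.End R M}

theorem isSkewAdjoint_iff_isAdjointPair_neg : B.IsSkewAdjoint f ↔ IsAdjointPair B B (-f) f := by
  simp only [IsSkewAdjoint, IsAdjointPair, Pi.neg_apply, map_neg, neg_apply]
  exact ⟨fun h x y => by rw [h, neg_neg], fun h x y => by rw [← h, neg_neg]⟩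

theorem IsAdjointPair.aeval (h : IsAdjointPair B B f g) (p : R[X]) :
    IsAdjointPair B B (Polynomial.aeval f p) (Polynomial.aeval g p) := by
  induction p using Polynomial.induction_on with
  | C c => simpa [Algebra.algebraMap_eq_smul_one] using isAdjointPair_one.smul c
  | add p q hp hq =>
    rw [map_add, map_add]
    exact hp.add hq
  | monomial k c ih =>
    have hf : Polynomial.aeval f (C c * X ^ (k + 1)) = Polynomial.aeval f (C c * X ^ k) * f := by
      rw [pow_succ, ← mul_assoc, map_mul, aeval_X]
    have hg : Polynomial.aeval g (C c * X ^ (k + 1)) = g * Polynomial.aeval g (C c * X ^ k) := by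
      rw [pow_succ', mul_left_comm, map_mul, aeval_X]
    rw [hf, hg]
    exact ih.mul h

theorem IsAdjointPair.aeval_eq_zero (hB : B.Nondegenerate) (h : IsAdjointPair B B f g)
    {p : R[X]} (hp : Polynomial.aeval g p = 0) : Polynomial.aeval f p = 0 :=
  B.isAdjointPair_unique_of_nondegenerate hB 0 _ _ (hp ▸ h.aeval p) isAdjointPair_zero

theorem IsAdjointPair.isNilpotent (hB : B.Nondegenerate) (h : IsAdjointPair B B f g)
    (hg : IsNilpotent g) : IsNilpotent f := by
  obtain ⟨k, hk⟩ := hg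
  exact ⟨k, by simpa using h.aeval_eq_zero hB (p := X ^ k) (by simpa using hk)⟩

theorem IsSkewAdjoint.orthogonalBilin_range (hB : B.SeparatingRight) (hf : B.IsSkewAdjoint f) :
    (range f).orthogonalBilin B = ker f := by
  ext x
  simp only [Submodule.mem_orthogonalBilin_iff, mem_range, forall_exists_index,
    forall_apply_eq_imp_iff, hf _ x, mem_ker, Pi.neg_apply, map_neg, neg_eq_zero]
  exact ⟨hB _, fun h _ => by rw [h, map_zero]⟩

theorem IsSkewAdjoint.nondegenerate_restrict_range (hB : B.SeparatingRight) (hB' : B.IsRefl)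
    (hf : B.IsSkewAdjoint f) (hdisj : Disjoint (ker f) (range f)) :
    (B.domRestrict₁₂ (range f) (range f)).Nondegenerate :=
  nondegenerate_restrict_of_disjoint_orthogonal hB'
    (by rw [hf.orthogonalBilin_range hB]; exact hdisj.symm)

end CommRing

section Field

variable {K V : Type*} [Field K] [AddCommGroup V] [Module K V]
  {B : LinearMap.BilinForm K V} {f g : Module.End K V}

theorem trace_mul_self_add_of_isNilpotent {s n : Module.End K V} (hsn : Commute s n)
    (hn : IsNilpotent n) : trace K V ((s + n) * (s + n)) = trace K V (s * s) := by
  have hsq : (s + n) * (s + n) = s * s + n * (2 • s + n) := by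
    rw [two_nsmul, add_mul, mul_add, mul_add, hsn.eq]
    noncomm_ring
  have hnil : IsNilpotent (n * (2 • s + n)) :=
    ((hsn.symm.smul_right 2).add_right (Commute.refl n)).isNilpotent_mul_right hn
  rw [hsq, map_add, (isNilpotent_trace_of_isNilpotent hnil).eq_zero, add_zero]

variable [FiniteDimensional K V]

theorem IsAdjointPair.isSemisimple (hB : B.Nondegenerate) (h : IsAdjointPair B B f g)
    (hg : g.IsSemisimple) : f.IsSemisimple :=
  Module.End.isSemisimple_of_squarefree_aeval_eq_zero hg.minpoly_squarefree
    (h.aeval_eq_zero hB (minpoly.aeval K g))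

theorem IsSkewAdjoint.of_add_of_isNilpotent [PerfectField K] {s n : Module.End K V}
    (hB : B.Nondegenerate) (hs : s.IsSemisimple) (hn : IsNilpotent n) (hsn : Commute s n)
    (h : B.IsSkewAdjoint (s + n)) : B.IsSkewAdjoint s := by
  obtain ⟨s', hs'⟩ : ∃ s' : Module.End K V, IsAdjointPair B B s' s :=
    ⟨_, B.isAdjointPairLeftAdjointOfNondegenerate hB s⟩
  obtain ⟨n', hn'⟩ : ∃ n' : Module.End K V, IsAdjointPair B B n' n :=
    ⟨_, B.isAdjointPairLeftAdjointOfNondegenerate hB n⟩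
  have hsn' : Commute n' s' := by
    have hs'n' := hs'.mul hn'
    rw [← hsn.eq] at hs'n'
    exact B.isAdjointPair_unique_of_nondegenerate hB (s * n) _ _ (hn'.mul hs') hs'n'
  have hsum : n' + s' = -n + -s := by
    refine B.isAdjointPair_unique_of_nondegenerate hB (s + n) _ _ ?_ ?_
    · rw [add_comm]
      exact hs'.add hn'
    · rw [← neg_add, add_comm]
      exact isSkewAdjoint_iff_isAdjointPair_neg.mp h
  obtain ⟨-, rfl⟩ := Module.End.isNilpotent_isSemisimple_unique (hn'.isNilpotent hB hn)
    (hs'.isSemisimple hB hs) hn.neg (Module.End.isSemisimple_neg.mpr hs)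
    hsn' hsn.symm.neg_left.neg_right hsum
  exact isSkewAdjoint_iff_isAdjointPair_neg.mpr hs'

theorem IsSkewAdjoint.conj_toDual (hB : B.Nondegenerate) (hf : B.IsSkewAdjoint f) :
    (B.toDual hB).conj (-f) = f.dualMap := by
  ext φ y
  obtain ⟨x, rfl⟩ := (B.toDual hB).surjective φ
  simp [LinearEquiv.conj_apply, BilinForm.toDual_def, hf x y]

theorem IsSkewAdjoint.trace_eq_zero [CharZero K] (hB : B.Nondegenerate)
    (hf : B.IsSkewAdjoint f) : trace K V f = 0 := by
  have h := trace_conj' (-f) (B.toDual hB)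
  rw [hf.conj_toDual hB, map_neg, show trace K _ f.dualMap = trace K V f from
    trace_transpose' f] at h
  linear_combination h / 2

theorem IsSkewAdjoint.even_finrank [CharZero K] (hB : B.Nondegenerate) (hf : B.IsSkewAdjoint f)
    (hker : ker f = ⊥) : Even (finrank K V) := by
  have hdet : LinearMap.det f ≠ 0 := fun h => det_eq_zero_iff_ker_ne_bot.mp h hker
  have h : LinearMap.det ((B.toDual hB).conj (-f)) = LinearMap.det (-f) := by
    rw [LinearEquiv.conj_apply, comp_assoc, det_conj]
  rw [hf.conj_toDual hB, det_dualMap, ← neg_one_smul K f, det_smul] at h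
  rw [← neg_one_pow_eq_one_iff_even (R := K) (by norm_num)]
  exact mul_right_cancel₀ hdet (h.symm.trans (one_mul _).symm)

theorem trace_mul_self_of_finrank_eq_two (h : finrank K V = 2) (f : Module.End K V) :
    trace K V (f * f) = trace K V f ^ 2 - 2 * LinearMap.det f := by
  let b := Module.finBasisOfFinrankEq K V h
  rw [trace_eq_matrix_trace K b, trace_eq_matrix_trace K b, ← det_toMatrix b, toMatrix_mul]
  simp only [Matrix.trace_fin_two, Matrix.det_fin_two, Matrix.mul_apply, Fin.sum_univ_two]
  ring

theorem IsSkewAdjoint.four_le_finrank [CharZero K] [Nontrivial V] (hB : B.Nondegenerate)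
    (hf : B.IsSkewAdjoint f) (hker : ker f = ⊥) (htr : trace K V (f * f) = 0) :
    4 ≤ finrank K V := by
  obtain ⟨k, hk⟩ := hf.even_finrank hB hker
  have hpos : 0 < finrank K V := finrank_pos
  have hne : finrank K V ≠ 2 := fun h2 => det_eq_zero_iff_ker_ne_bot.mp (by
    have h := trace_mul_self_of_finrank_eq_two h2 f
    rw [htr, hf.trace_eq_zero hB] at h
    linear_combination h / 2) hker
  omega

end Field

section Real

variable {V : Type*} [AddCommGroup V] [Module ℝ V] {B : LinearMap.BilinForm ℝ V}
  {f : Module.End ℝ V}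

theorem BilinForm.IsSymm.apply_self_mul_apply_self_pos (hB : B.IsSymm)
    (hanis : ∀ x, B x x = 0 → x = 0) {x y : V} (hx : x ≠ 0) (hy : y ≠ 0) :
    0 < B x x * B y y := by
  have hyy : B y y ≠ 0 := mt (hanis y) hy
  by_contra! hle
  have hlt : B x x * B y y < 0 := hle.lt_of_ne (mul_ne_zero (mt (hanis x) hx) hyy)
  obtain ⟨t, ht⟩ := exists_quadratic_eq_zero (b := 2 * B x y) (c := B x x) hyy
    ⟨√(discrim (B y y) (2 * B x y) (B x x)),
      (Real.mul_self_sqrt (by rw [discrim]; nlinarith [sq_nonneg (B x y)])).symm⟩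
  have hxt : x + t • y = 0 := hanis _ <| by
    have hyx : B y x = B x y := hB.eq y x
    simp only [map_add, map_smul, LinearMap.add_apply, LinearMap.smul_apply, smul_eq_mul, hyx]
    linear_combination ht
  rw [add_eq_zero_iff_eq_neg.mp hxt] at hlt
  simp only [map_neg, map_smul, LinearMap.neg_apply, LinearMap.smul_apply, smul_eq_mul] at hlt
  nlinarith [sq_nonneg (t * B y y)]

theorem IsSkewAdjoint.trace_mul_self_neg [FiniteDimensional ℝ V] (hB : B.IsSymm)
    (hanis : ∀ x, B x x = 0 → x = 0) (hf : B.IsSkewAdjoint f) (hf0 : f ≠ 0) :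
    trace ℝ V (f * f) < 0 := by
  obtain ⟨v, hv⟩ := B.exists_orthogonal_basis (BilinForm.isSymm_iff.mp hB)
  have hcoord : ∀ x i, v.repr x i * B (v i) (v i) = B x (v i) := by
    intro x i
    conv_rhs => rw [← v.sum_repr x]
    simp only [map_sum, map_smul, LinearMap.sum_apply, LinearMap.smul_apply, smul_eq_mul]
    rw [Finset.sum_eq_single i (fun j _ hj => by rw [hv hj, mul_zero]) (by simp)]
  have hdiag : ∀ i, toMatrix v v (f * f) i i = -(B (f (v i)) (f (v i)) / B (v i) (v i)) := by
    intro i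
    rw [toMatrix_apply, ← neg_div, eq_div_iff (mt (hanis _) (v.ne_zero i)), hcoord,
      Module.End.mul_apply, hf]
    simp
  have hterm : ∀ i, f (v i) ≠ 0 → 0 < B (f (v i)) (f (v i)) / B (v i) (v i) := fun i hi =>
    div_pos_iff.mpr (mul_pos_iff.mp (hB.apply_self_mul_apply_self_pos hanis hi (v.ne_zero i)))
  obtain ⟨i, hi⟩ : ∃ i, f (v i) ≠ 0 := by
    by_contra! h
    exact hf0 (v.ext fun i => by simp [h i])
  rw [trace_eq_matrix_trace ℝ v, Matrix.trace]
  refine Finset.sum_neg' (fun j _ => ?_) ⟨i, Finset.mem_univ _, ?_⟩ <;>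
    simp only [Matrix.diag, hdiag, Left.neg_nonpos_iff, Left.neg_neg_iff]
  · by_cases hj : f (v j) = 0
    · simp [hj]
    · exact (hterm j hj).le
  · exact hterm i hi

theorem IsSkewAdjoint.exists_ne_zero_apply_self_eq_zero [FiniteDimensional ℝ V] (hB : B.IsSymm)
    (hf : B.IsSkewAdjoint f) (hf0 : f ≠ 0) (htr : trace ℝ V (f * f) = 0) :
    ∃ x ≠ 0, B x x = 0 := by
  by_contra! hanis
  exact (hf.trace_mul_self_neg hB (fun x hx => not_not.mp fun hx0 => hanis x hx0 hx) hf0).ne htr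

end Real

theorem isSkewAdjoint_ad {R L : Type*} [CommRing R] [LieRing L] [LieAlgebra R L]
    {B : LinearMap.BilinForm R L} (hB : ∀ x y z : L, B ⁅x, y⁆ z = -B y ⁅x, z⁆) (a : L) :
    B.IsSkewAdjoint (LieAlgebra.ad R L a) := fun x y => by
  simpa only [LieAlgebra.ad_apply, Pi.neg_apply, map_neg] using hB a x y

end LinearMap

theorem Module.End.IsSemisimple.isCompl_ker_range {K V : Type*} [Field K] [AddCommGroup V]
    [Module K V] [FiniteDimensional K V] {f : Module.End K V} (hf : f.IsSemisimple) :
    IsCompl (ker f) (range f) := by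
  obtain ⟨q, hq, hcompl⟩ := Module.End.isSemisimple_iff.mp hf (ker f) fun x hx => by
    simp [mem_ker.mp hx]
  have hrange : range f ≤ q := by
    rintro _ ⟨x, rfl⟩
    obtain ⟨k, hk, c, hc, rfl⟩ :=
      Submodule.mem_sup.mp (hcompl.sup_eq_top ▸ Submodule.mem_top (x := x))
    rw [map_add, mem_ker.mp hk, zero_add]
    exact hq hc
  have hdisj : Disjoint (ker f) (range f) := hcompl.disjoint.mono_right hrange
  refine ⟨hdisj, codisjoint_iff.mpr (Submodule.eq_top_of_disjoint _ _ ?_ hdisj)⟩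
  rw [add_comm, finrank_range_add_finrank_ker]

/-- Let `(𝔤, ⟨·,·⟩)` be a metric Lie algebra and `a ∈ 𝔤` with `ad(a)` not
nilpotent and `trace(ad(a)²) = 0`. If `ad(a) = S + N` is the Jordan–Chevalley decomposition
(`S` semisimple, `N` nilpotent, `SN = NS`), then `W₁ = im S` satisfies `dim W₁ ≥ 4`, the
restriction of `⟨·,·⟩` to `W₁` is nondegenerate, and `W₁` contains a nonzero isotropic vector. -/
theorem stmt_17 (L : Type*) [LieRing L] [LieAlgebra ℝ L] [FiniteDimensional ℝ L]
    (B : LinearMap.BilinForm ℝ L)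
    (hsymm : ∀ x y : L, B x y = B y x)
    (hnondeg : B.Nondegenerate)
    (hinv : ∀ x y z : L, B ⁅x, y⁆ z = - B y ⁅x, z⁆)
    (a : L)
    (ha : ¬ IsNilpotent (LieAlgebra.ad ℝ L a))
    (htr : LinearMap.trace ℝ L (LieAlgebra.ad ℝ L a ∘ₗ LieAlgebra.ad ℝ L a) = 0)
    (S N : Module.End ℝ L)
    (hS : S.IsSemisimple)
    (hN : IsNilpotent N)
    (hcomm : Commute S N)
    (hSN : LieAlgebra.ad ℝ L a = S + N) :
    4 ≤ Module.finrank ℝ (LinearMap.range S) ∧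
    (∀ v ∈ LinearMap.range S, (∀ w ∈ LinearMap.range S, B v w = 0) → v = 0) ∧
    (∃ v ∈ LinearMap.range S, v ≠ 0 ∧ B v v = 0) := by
  have hD := isSkewAdjoint_ad hinv a
  rw [hSN] at hD
  have hSskew : B.IsSkewAdjoint S := IsSkewAdjoint.of_add_of_isNilpotent hnondeg hS hN hcomm hD
  have hdisj := hS.isCompl_ker_range.disjoint
  let BW := B.domRestrict₁₂ (range S) (range S)
  let T : Module.End ℝ (range S) := S.restrict fun x _ => mem_range_self S x
  have hBW : BW.Nondegenerate :=
    hSskew.nondegenerate_restrict_range hnondeg.2 (fun x y h => hsymm x y ▸ h) hdisj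
  have hT : BW.IsSkewAdjoint T := fun x y => hSskew x y
  have hkerT : ker T = ⊥ := by
    rw [ker_restrict, ← Submodule.disjoint_iff_comap_eq_bot]
    exact hdisj.symm
  have htrT : trace ℝ (range S) (T * T) = 0 := by
    rw [show T * T = (S * S).restrict fun x _ => mem_range_self S (S x) from rfl,
      trace_restrict_eq_of_forall_mem, ← trace_mul_self_add_of_isNilpotent hcomm hN, ← hSN]
    exact htr
  have : Nontrivial (range S) := by
    rw [Submodule.nontrivial_iff_ne_bot, Ne, range_eq_bot]
    rintro rfl
    exact ha (by simpa [hSN] using hN)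
  have hT0 : T ≠ 0 := fun h => top_ne_bot (by rwa [h, ker_zero] at hkerT)
  obtain ⟨x, hx0, hx⟩ :=
    hT.exists_ne_zero_apply_self_eq_zero (B := BW) ⟨fun x y => hsymm x y⟩ hT0 htrT
  refine ⟨hT.four_le_finrank hBW hkerT htrT, fun v hv hvW => ?_, ⟨x, x.2, by simpa using hx0, hx⟩⟩
  simpa using hBW.1 ⟨v, hv⟩ fun w => hvW w w.2
end
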